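/- arXiv:2305.05565 — 7 statements merged into one kernel-verified Lean document; each statement's English description precedes it below -/
import Mathlib

section
/- In the asymptotic Bernoulli setting, there exist constants c > 0 and C' > 0 such that for all sufficiently large n: with probability at least 1 − exp(−c·n^{1−δ}), the vector x̂ := (1/(C̃·n·p))·1 (for a suitable constant 0 < C̃ < 1) is feasible for the linear program; consequently P(val_LP ≤ C'/p) ≥ 1 − exp(−c·n^{1−δ}), and also P(the integer program is feasible, i.e. some x ∈ {0,1}^n satisfies Ax ≥ 1) ≥ 1 − exp(−c·n^{1−δ}). -/
open Classical Finset
open scoped ENNReal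
open Filter

/-- Probability weight of a 0/1 matrix with i.i.d. Bernoulli(p) entries. -/
noncomputable def mWeight (m n : ℕ) (p : ℝ) (ω : Fin m → Fin n → Bool) : ℝ :=
  ∏ i : Fin m, ∏ j : Fin n, if ω i j then p else 1 - p

/-- Probability of an event under the i.i.d. Bernoulli(p) matrix distribution. -/
noncomputable def mProb (m n : ℕ) (p : ℝ) (P : (Fin m → Fin n → Bool) → Prop) : ℝ :=
  ∑ ω : Fin m → Fin n → Bool, if P ω then mWeight m n p ω else 0

/-- Feasibility for the LP: `A x ≥ 1` entrywise. -/
def feasLP {m n : ℕ} (ω : Fin m → Fin n → Bool) (x : Fin n → ℝ) : Prop :=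
  ∀ i : Fin m, 1 ≤ ∑ j : Fin n, (if ω i j then (1 : ℝ) else 0) * x j

/-- Feasibility of a 0/1 vector. -/
def feasIP {m n : ℕ} (ω : Fin m → Fin n → Bool) (x : Fin n → Bool) : Prop :=
  feasLP ω fun j => if x j then (1 : ℝ) else 0

/-- The LP value: infimum of `‖x‖₁` over feasible `x ∈ [0,1]^n` (`⊤` if infeasible). -/
noncomputable def valLP {m n : ℕ} (ω : Fin m → Fin n → Bool) : ℝ≥0∞ :=
  sInf {v | ∃ x : Fin n → ℝ, (∀ j, 0 ≤ x j ∧ x j ≤ 1) ∧ feasLP ω x ∧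
    v = ENNReal.ofReal (∑ j : Fin n, |x j|)}

/-! ### Auxiliary lemmas -/

lemma sum_prod_swap {ι κ : Type*} [Fintype ι] [DecidableEq ι] [Fintype κ]
    (f : ι → κ → ℝ) : ∑ x : ι → κ, ∏ i, f i (x i) = ∏ i, ∑ j, f i j := by
  rw [Finset.prod_univ_sum (fun _ => (univ : Finset κ)) f, Fintype.piFinset_univ]

noncomputable def rowW (n : ℕ) (p : ℝ) (r : Fin n → Bool) : ℝ :=
  ∏ j : Fin n, if r j then p else 1 - p

noncomputable def cnt {n : ℕ} (r : Fin n → Bool) : ℕ :=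
  (univ.filter fun j => r j = true).card

lemma rowW_nonneg {n : ℕ} {p : ℝ} (h0 : 0 < p) (h1 : p ≤ 1) (r : Fin n → Bool) :
    0 ≤ rowW n p r :=
  Finset.prod_nonneg fun j _ => by split <;> linarith

lemma sum_rowW {n : ℕ} (p : ℝ) : ∑ r : Fin n → Bool, rowW n p r = 1 := by
  unfold rowW
  rw [sum_prod_swap (fun (_ : Fin n) (b : Bool) => if b = true then p else 1 - p)]
  simp

lemma mWeight_eq {m n : ℕ} {p : ℝ} (ω : Fin m → Fin n → Bool) :
    mWeight m n p ω = ∏ i : Fin m, rowW n p (ω i) := rfl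

lemma mWeight_nonneg {m n : ℕ} {p : ℝ} (h0 : 0 < p) (h1 : p ≤ 1)
    (ω : Fin m → Fin n → Bool) : 0 ≤ mWeight m n p ω :=
  Finset.prod_nonneg fun i _ => rowW_nonneg h0 h1 (ω i)

lemma mProb_mono {m n : ℕ} {p : ℝ} (h0 : 0 < p) (h1 : p ≤ 1)
    {P Q : (Fin m → Fin n → Bool) → Prop} (h : ∀ ω, P ω → Q ω) :
    mProb m n p P ≤ mProb m n p Q := by
  apply Finset.sum_le_sum
  intro ω _
  by_cases hP : P ω
  · simp [hP, h ω hP]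
  · simp only [hP, if_false]
    split
    · exact mWeight_nonneg h0 h1 ω
    · exact le_rfl

lemma mProb_total {m n : ℕ} (p : ℝ) :
    ∑ ω : Fin m → Fin n → Bool, mWeight m n p ω = 1 := by
  have := sum_prod_swap (fun (_ : Fin m) (r : Fin n → Bool) => rowW n p r)
  simp only [mWeight_eq]
  rw [this]
  simp [sum_rowW]

lemma mProb_compl {m n : ℕ} (p : ℝ) (P : (Fin m → Fin n → Bool) → Prop) :
    mProb m n p P + mProb m n p (fun ω => ¬ P ω) = 1 := by
  rw [mProb, mProb, ← Finset.sum_add_distrib]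
  rw [← mProb_total (m := m) (n := n) p]
  apply Finset.sum_congr rfl
  intro ω _
  by_cases hP : P ω <;> simp [hP]

lemma mProb_row {m n : ℕ} (p : ℝ) (i₀ : Fin m) (Q : (Fin n → Bool) → Prop) :
    mProb m n p (fun ω => Q (ω i₀)) = ∑ r : Fin n → Bool, if Q r then rowW n p r else 0 := by
  have key : ∀ ω : Fin m → Fin n → Bool,
      (if Q (ω i₀) then mWeight m n p ω else 0)
        = ∏ i : Fin m, (if i = i₀ then (if Q (ω i) then rowW n p (ω i) else 0)
            else rowW n p (ω i)) := by
    intro ω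
    by_cases hQ : Q (ω i₀)
    · rw [if_pos hQ, mWeight_eq]
      apply Finset.prod_congr rfl
      intro i _
      by_cases hi : i = i₀ <;> simp [hi, hQ]
    · rw [if_neg hQ]
      symm
      apply Finset.prod_eq_zero (Finset.mem_univ i₀)
      simp [hQ]
  rw [mProb]
  simp only [key]
  rw [sum_prod_swap (fun (i : Fin m) (r : Fin n → Bool) =>
    if i = i₀ then (if Q r then rowW n p r else 0) else rowW n p r)]
  have : ∀ i : Fin m, (∑ r : Fin n → Bool, if i = i₀ then (if Q r then rowW n p r else 0)
      else rowW n p r) = if i = i₀ then (∑ r : Fin n → Bool, if Q r then rowW n p r else 0) else 1 := by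
    intro i
    by_cases hi : i = i₀ <;> simp [hi, sum_rowW]
  simp only [this]
  rw [Finset.prod_ite_eq' univ i₀]
  simp

lemma mProb_union_bound {m n : ℕ} {p : ℝ} (h0 : 0 < p) (h1 : p ≤ 1)
    (Bad : (Fin n → Bool) → Prop) :
    mProb m n p (fun ω => ∃ i, Bad (ω i))
      ≤ ∑ i : Fin m, mProb m n p (fun ω => Bad (ω i)) := by
  have key : mProb m n p (fun ω => ∃ i, Bad (ω i))
      ≤ ∑ ω : Fin m → Fin n → Bool, ∑ i : Fin m,
        (if Bad (ω i) then mWeight m n p ω else 0) := by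
    rw [mProb]
    apply Finset.sum_le_sum
    intro ω _
    have hnn : ∀ i : Fin m, i ∈ (univ : Finset (Fin m)) →
        0 ≤ (if Bad (ω i) then mWeight m n p ω else 0) := by
      intro i _
      by_cases hb : Bad (ω i) <;> simp [hb, mWeight_nonneg h0 h1 ω]
    by_cases hex : ∃ i, Bad (ω i)
    · rw [if_pos hex]
      obtain ⟨i₀, hi₀⟩ := hex
      have h := Finset.single_le_sum
        (f := fun i => if Bad (ω i) then mWeight m n p ω else 0) hnn (Finset.mem_univ i₀)
      simpa [hi₀] using h
    · rw [if_neg hex]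
      exact Finset.sum_nonneg hnn
  refine le_trans key (le_of_eq ?_)
  rw [Finset.sum_comm]
  rfl

lemma chernoff_row {n : ℕ} {p a : ℝ} (h0 : 0 < p) (h1 : p ≤ 1) :
    (∑ r : Fin n → Bool, if ((cnt r : ℝ) < a) then rowW n p r else 0)
      ≤ Real.exp (a * Real.log 2 - n * (p / 2)) := by
  have hrw : ∀ r : Fin n → Bool, 0 ≤ rowW n p r := rowW_nonneg h0 h1
  have step1 : ∀ r : Fin n → Bool,
      (if ((cnt r : ℝ) < a) then rowW n p r else 0)
        ≤ (2 : ℝ) ^ a * ((1/2 : ℝ) ^ (cnt r) * rowW n p r) := by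
    intro r
    have hpos : 0 ≤ (2 : ℝ) ^ a * ((1/2 : ℝ) ^ (cnt r) * rowW n p r) :=
      mul_nonneg (by positivity) (mul_nonneg (by positivity) (hrw r))
    split
    · rename_i hlt
      have h2 : (2 : ℝ) ^ ((cnt r : ℝ)) ≤ (2 : ℝ) ^ a :=
        Real.rpow_le_rpow_of_exponent_le one_le_two (le_of_lt hlt)
      rw [Real.rpow_natCast] at h2
      have hone : 1 ≤ (2 : ℝ) ^ a * (1/2 : ℝ) ^ (cnt r) := by
        calc (1:ℝ) = (2 : ℝ) ^ (cnt r) * (1/2 : ℝ) ^ (cnt r) := by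
              rw [← mul_pow]; norm_num
          _ ≤ (2 : ℝ) ^ a * (1/2 : ℝ) ^ (cnt r) :=
              mul_le_mul_of_nonneg_right h2 (by positivity)
      calc rowW n p r = 1 * rowW n p r := (one_mul _).symm
        _ ≤ ((2 : ℝ) ^ a * (1/2 : ℝ) ^ (cnt r)) * rowW n p r :=
            mul_le_mul_of_nonneg_right hone (hrw r)
        _ = (2 : ℝ) ^ a * ((1/2 : ℝ) ^ (cnt r) * rowW n p r) := by ring
    · exact hpos
  have step2 : ∀ r : Fin n → Bool,
      (1/2 : ℝ) ^ (cnt r) * rowW n p r = ∏ j : Fin n, (if r j then p/2 else 1 - p) := by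
    intro r
    have hc : (1/2 : ℝ) ^ (cnt r) = ∏ j : Fin n, (if r j then (1/2 : ℝ) else 1) := by
      rw [Finset.prod_ite, Finset.prod_const, Finset.prod_const, one_pow, mul_one]
      simp [cnt]
    rw [hc, rowW, ← Finset.prod_mul_distrib]
    apply Finset.prod_congr rfl
    intro j _
    by_cases h : r j <;> simp [h] <;> ring
  have step3 : (∑ r : Fin n → Bool, ∏ j : Fin n, (if r j then p/2 else 1 - p))
      = (1 - p/2) ^ n := by
    rw [sum_prod_swap (fun (_ : Fin n) (b : Bool) => if b = true then p/2 else 1 - p)]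
    have : ∀ j : Fin n, (∑ b : Bool, if b = true then p/2 else 1 - p) = 1 - p/2 := by
      intro j; simp; ring
    rw [Finset.prod_congr rfl (fun j _ => this j), Finset.prod_const, Finset.card_univ,
      Fintype.card_fin]
  calc (∑ r : Fin n → Bool, if ((cnt r : ℝ) < a) then rowW n p r else 0)
      ≤ ∑ r : Fin n → Bool, (2 : ℝ) ^ a * ((1/2 : ℝ) ^ (cnt r) * rowW n p r) :=
        Finset.sum_le_sum fun r _ => step1 r
    _ = (2 : ℝ) ^ a * ∑ r : Fin n → Bool, ((1/2 : ℝ) ^ (cnt r) * rowW n p r) := by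
        rw [Finset.mul_sum]
    _ = (2 : ℝ) ^ a * (1 - p/2) ^ n := by
        rw [← step3]; congr 1; exact Finset.sum_congr rfl fun r _ => step2 r
    _ ≤ (2 : ℝ) ^ a * (Real.exp (-(p/2))) ^ n := by
        apply mul_le_mul_of_nonneg_left _ (by positivity)
        apply pow_le_pow_left₀ (by linarith)
        linarith [Real.add_one_le_exp (-(p/2))]
    _ = Real.exp (a * Real.log 2 - n * (p / 2)) := by
        rw [← Real.exp_nat_mul, Real.rpow_def_of_pos (by norm_num : (0:ℝ) < 2),
          ← Real.exp_add]
        congr 1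
        ring


/-- In the asymptotic Bernoulli setting, there exist `c, C' > 0` such that
for all large `n`: w.p. `≥ 1 - exp(-c n^{1-δ})` the vector `x̂ = (1/(C̃ n p)) 𝟙` is feasible
for the LP (for a suitable `0 < C̃ < 1`); consequently `P(val_LP ≤ C'/p) ≥ 1 - exp(-c n^{1-δ})`,
and the IP is feasible with the same probability. -/
theorem stmt1 (m : ℕ → ℕ) (p : ℕ → ℝ) (δ : ℝ)
    (hδ : 0 < δ ∧ δ < 1)
    (hp0 : ∀ n, 0 < p n ∧ p n ≤ 1)
    (hm : ∃ c C : ℝ, 0 < c ∧ 0 < C ∧ ∃ N : ℕ, ∀ n ≥ N,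
      c * (n : ℝ) ^ c ≤ (m n : ℝ) ∧ (m n : ℝ) ≤ C * (n : ℝ) ^ C)
    (hp : ∃ N : ℕ, ∀ n ≥ N, (n : ℝ) ^ (-δ) ≤ p n ∧ p n ≤ 1 / 2) :
    ∃ c C' Ct : ℝ, 0 < c ∧ 0 < C' ∧ 0 < Ct ∧ Ct < 1 ∧ ∃ N : ℕ, ∀ n ≥ N,
      1 - Real.exp (-c * (n : ℝ) ^ (1 - δ)) ≤
        mProb (m n) n (p n) (fun ω =>
          (∀ j : Fin n, 0 ≤ 1 / (Ct * n * p n) ∧ 1 / (Ct * n * p n) ≤ 1) ∧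
          feasLP ω fun _ => 1 / (Ct * n * p n)) ∧
      1 - Real.exp (-c * (n : ℝ) ^ (1 - δ)) ≤
        mProb (m n) n (p n) (fun ω => valLP ω ≤ ENNReal.ofReal (C' / p n)) ∧
      1 - Real.exp (-c * (n : ℝ) ^ (1 - δ)) ≤
        mProb (m n) n (p n) (fun ω => ∃ x : Fin n → Bool, feasIP ω x) := by
  obtain ⟨cm, Cm, hcm, hCm, Nm, hmN⟩ := hm
  obtain ⟨Np, hpN⟩ := hp
  have h1δ : 0 < 1 - δ := by linarith [hδ.2]
  have hcast : Tendsto (fun n : ℕ => (n : ℝ)) atTop atTop := tendsto_natCast_atTop_atTop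
  have hrpowN : Tendsto (fun n : ℕ => (n : ℝ) ^ (1 - δ)) atTop atTop :=
    (tendsto_rpow_atTop h1δ).comp hcast
  -- condition (iii): C_m x^{C_m} ≤ exp(x^{1-δ}/8) eventually
  have hrealIII : ∀ᶠ x : ℝ in atTop, Cm * x ^ Cm ≤ Real.exp (x ^ (1 - δ) / 8) := by
    have hlog := (isLittleO_log_rpow_atTop h1δ).def
      (show (0:ℝ) < 1 / (32 * (Cm + 1)) by positivity)
    have hBig : ∀ᶠ x : ℝ in atTop, 16 * |Real.log Cm| ≤ x ^ (1 - δ) :=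
      (tendsto_rpow_atTop h1δ).eventually_ge_atTop _
    filter_upwards [hlog, hBig, eventually_ge_atTop (1 : ℝ)] with x hl hb h1x
    have hx0 : (0:ℝ) < x := lt_of_lt_of_le one_pos h1x
    have hlx : 0 ≤ Real.log x := Real.log_nonneg h1x
    have hrp : 0 ≤ x ^ (1 - δ) := Real.rpow_nonneg hx0.le _
    rw [Real.norm_eq_abs, Real.norm_eq_abs, abs_of_nonneg hlx, abs_of_nonneg hrp] at hl
    have hε : Cm * (1 / (32 * (Cm + 1))) ≤ 1 / 16 := by
      rw [mul_one_div, div_le_div_iff₀ (by positivity) (by norm_num)]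
      nlinarith
    have h2 : Cm * Real.log x ≤ x ^ (1 - δ) / 16 := by
      calc Cm * Real.log x ≤ Cm * ((1 / (32 * (Cm + 1))) * x ^ (1 - δ)) :=
            mul_le_mul_of_nonneg_left hl hCm.le
        _ = (Cm * (1 / (32 * (Cm + 1)))) * x ^ (1 - δ) := by ring
        _ ≤ (1/16) * x ^ (1 - δ) := mul_le_mul_of_nonneg_right hε hrp
        _ = x ^ (1 - δ) / 16 := by ring
    have hlogC : Real.log Cm ≤ x ^ (1 - δ) / 16 := by
      have := le_abs_self (Real.log Cm)
      linarith
    have key : Cm * x ^ Cm = Real.exp (Real.log Cm + Cm * Real.log x) := by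
      rw [Real.exp_add, Real.exp_log hCm, Real.rpow_def_of_pos hx0,
        mul_comm (Real.log x) Cm]
    rw [key]
    apply Real.exp_le_exp.mpr
    linarith
  have hIII : ∀ᶠ n : ℕ in atTop, Cm * (n:ℝ) ^ Cm ≤ Real.exp ((n:ℝ) ^ (1 - δ) / 8) :=
    hcast.eventually hrealIII
  have hII : ∀ᶠ n : ℕ in atTop, (4:ℝ) ≤ (n:ℝ) ^ (1 - δ) := hrpowN.eventually_ge_atTop 4
  have hall := hII.and (hIII.and ((eventually_ge_atTop Nm).and
    ((eventually_ge_atTop Np).and (eventually_ge_atTop 1))))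
  obtain ⟨N, hN⟩ := eventually_atTop.mp hall
  refine ⟨1/8, 4, 1/4, by norm_num, by norm_num, by norm_num, by norm_num, N, ?_⟩
  intro n hn
  obtain ⟨h4le, hCmexp, hnNm, hnNp, hn1⟩ := hN n hn
  set q := p n with hqdef
  have hq0 : 0 < q := (hp0 n).1
  have hq1 : q ≤ 1 := (hp0 n).2
  have hqlow : (n:ℝ) ^ (-δ) ≤ q := (hpN n hnNp).1
  have hmub : (m n : ℝ) ≤ Cm * (n:ℝ) ^ Cm := (hmN n hnNm).2
  have hnpos : (0:ℝ) < n := by exact_mod_cast Nat.lt_of_lt_of_le Nat.zero_lt_one hn1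
  set X := (n:ℝ) ^ (1 - δ) with hXdef
  have hnq : X ≤ (n:ℝ) * q := by
    have he : X = (n:ℝ) * (n:ℝ) ^ (-δ) := by
      rw [hXdef, show (1 - δ) = 1 + (-δ) by ring, Real.rpow_add hnpos, Real.rpow_one]
    rw [he]
    exact mul_le_mul_of_nonneg_left hqlow hnpos.le
  have ha4 : (4:ℝ) ≤ (n:ℝ) * q := le_trans h4le hnq
  have hapos : (0:ℝ) < (n:ℝ) * q / 4 := by linarith
  have ha1 : (1:ℝ) ≤ (n:ℝ) * q / 4 := by linarith
  have hXpos : 0 < X := lt_of_lt_of_le (by norm_num) h4le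
  -- probability bound for the good event
  set Bad : (Fin n → Bool) → Prop := fun r => ((cnt r : ℝ) < (n:ℝ) * q / 4) with hBaddef
  have hrowbd : ∀ i : Fin (m n),
      mProb (m n) n q (fun ω => Bad (ω i)) ≤ Real.exp (-(X / 4)) := by
    intro i
    rw [mProb_row q i Bad]
    refine le_trans (chernoff_row hq0 hq1) (Real.exp_le_exp.mpr ?_)
    have hlog2 : Real.log 2 ≤ 1 := by
      have := Real.log_le_sub_one_of_pos (by norm_num : (0:ℝ) < 2)
      linarith
    have h1 : ((n:ℝ) * q / 4) * Real.log 2 ≤ (n:ℝ) * q / 4 := by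
      calc ((n:ℝ) * q / 4) * Real.log 2 ≤ ((n:ℝ) * q / 4) * 1 :=
          mul_le_mul_of_nonneg_left hlog2 hapos.le
        _ = (n:ℝ) * q / 4 := mul_one _
    linarith
  have hunion : mProb (m n) n q (fun ω => ∃ i, Bad (ω i)) ≤ Real.exp (-(1/8) * X) := by
    calc mProb (m n) n q (fun ω => ∃ i, Bad (ω i))
        ≤ ∑ i : Fin (m n), mProb (m n) n q (fun ω => Bad (ω i)) :=
          mProb_union_bound hq0 hq1 Bad
      _ ≤ ∑ _i : Fin (m n), Real.exp (-(X / 4)) :=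
          Finset.sum_le_sum fun i _ => hrowbd i
      _ = (m n : ℝ) * Real.exp (-(X / 4)) := by
          rw [Finset.sum_const, Finset.card_univ, Fintype.card_fin, nsmul_eq_mul]
      _ ≤ (Cm * (n:ℝ) ^ Cm) * Real.exp (-(X / 4)) :=
          mul_le_mul_of_nonneg_right hmub (Real.exp_nonneg _)
      _ ≤ Real.exp (X / 8) * Real.exp (-(X / 4)) :=
          mul_le_mul_of_nonneg_right hCmexp (Real.exp_nonneg _)
      _ = Real.exp (-(1/8) * X) := by rw [← Real.exp_add]; congr 1; ring
  have hE : 1 - Real.exp (-(1/8) * X) ≤ mProb (m n) n q (fun ω => ¬ ∃ i, Bad (ω i)) := by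
    have hc : mProb (m n) n q (fun ω => ∃ i, Bad (ω i))
        + mProb (m n) n q (fun ω => ¬ ∃ i, Bad (ω i)) = 1 :=
      mProb_compl (m := m n) (n := n) q (fun ω => ∃ i, Bad (ω i))
    linarith
  -- deterministic consequences of the good event
  have hEimp : ∀ ω : Fin (m n) → Fin n → Bool, (¬ ∃ i, Bad (ω i)) →
      ∀ i, (n:ℝ) * q / 4 ≤ (cnt (ω i) : ℝ) := by
    intro ω hω i
    by_contra hlt
    push_neg at hlt
    exact hω ⟨i, hlt⟩
  have hsum : ∀ (ω : Fin (m n) → Fin n → Bool) (i : Fin (m n)) (x : ℝ),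
      ∑ j : Fin n, (if ω i j then (1:ℝ) else 0) * x = (cnt (ω i) : ℝ) * x := by
    intro ω i x
    simp only [ite_mul, one_mul, zero_mul]
    rw [Finset.sum_ite, Finset.sum_const, Finset.sum_const, smul_zero, add_zero,
      nsmul_eq_mul]
    simp [cnt]
  have haeq : (1/4 : ℝ) * (n:ℝ) * q = (n:ℝ) * q / 4 := by ring
  have hx0 : (0:ℝ) ≤ 1 / ((1/4 : ℝ) * (n:ℝ) * q) := by rw [haeq]; positivity
  have hx1 : 1 / ((1/4 : ℝ) * (n:ℝ) * q) ≤ 1 := by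
    rw [haeq, div_le_one hapos]; exact ha1
  have hfeas : ∀ ω : Fin (m n) → Fin n → Bool, (¬ ∃ i, Bad (ω i)) →
      feasLP ω (fun _ => 1 / ((1/4 : ℝ) * (n:ℝ) * q)) := by
    intro ω hω i
    rw [hsum ω i, haeq, mul_one_div, le_div_iff₀ hapos, one_mul]
    exact hEimp ω hω i
  -- event 1
  have hgoal1 : mProb (m n) n q (fun ω => ¬ ∃ i, Bad (ω i)) ≤
      mProb (m n) n q (fun ω =>
        (∀ _j : Fin n, 0 ≤ 1 / ((1/4 : ℝ) * (n:ℝ) * q) ∧ 1 / ((1/4 : ℝ) * (n:ℝ) * q) ≤ 1) ∧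
        feasLP ω fun _ => 1 / ((1/4 : ℝ) * (n:ℝ) * q)) := by
    apply mProb_mono hq0 hq1
    intro ω hω
    exact ⟨fun _ => ⟨hx0, hx1⟩, hfeas ω hω⟩
  -- event 2
  have hsumabs : (∑ _j : Fin n, |1 / ((1/4 : ℝ) * (n:ℝ) * q)|) = 4 / q := by
    rw [Finset.sum_const, Finset.card_univ, Fintype.card_fin, nsmul_eq_mul,
      abs_of_nonneg hx0, haeq]
    field_simp
  have hgoal2 : mProb (m n) n q (fun ω => ¬ ∃ i, Bad (ω i)) ≤
      mProb (m n) n q (fun ω => valLP ω ≤ ENNReal.ofReal ((4:ℝ) / q)) := by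
    apply mProb_mono hq0 hq1
    intro ω hω
    have hmem : ENNReal.ofReal (∑ _j : Fin n, |1 / ((1/4 : ℝ) * (n:ℝ) * q)|) ∈
        {v | ∃ x : Fin n → ℝ, (∀ j, 0 ≤ x j ∧ x j ≤ 1) ∧ feasLP ω x ∧
          v = ENNReal.ofReal (∑ j : Fin n, |x j|)} :=
      ⟨fun _ => 1 / ((1/4 : ℝ) * (n:ℝ) * q), fun _ => ⟨hx0, hx1⟩, hfeas ω hω, rfl⟩
    refine le_trans (sInf_le hmem) ?_
    rw [hsumabs]
  -- event 3
  have hgoal3 : mProb (m n) n q (fun ω => ¬ ∃ i, Bad (ω i)) ≤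
      mProb (m n) n q (fun ω => ∃ x : Fin n → Bool, feasIP ω x) := by
    apply mProb_mono hq0 hq1
    intro ω hω
    refine ⟨fun _ => true, fun i => ?_⟩
    have h1 : ∑ j : Fin n, (if ω i j then (1:ℝ) else 0) *
        (if (fun _ : Fin n => true) j then (1:ℝ) else 0)
        = ∑ j : Fin n, (if ω i j then (1:ℝ) else 0) * 1 := by simp
    show (1:ℝ) ≤ ∑ j : Fin n, (if ω i j then (1:ℝ) else 0) *
        (if (fun _ : Fin n => true) j then (1:ℝ) else 0)
    rw [h1, hsum ω i 1, mul_one]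
    exact le_trans ha1 (hEimp ω hω i)
  exact ⟨le_trans hE hgoal1, le_trans hE hgoal2, le_trans hE hgoal3⟩
end

section
/- Let x ≥ e and let w > 0 satisfy w·e^w = x (so w = W₀(x), the principal branch of the Lambert W function). Then log x − log log x + (log log x)/(2 log x) ≤ w ≤ log x − log log x + (e/(e−1))·(log log x)/(log x). -/
/-- Bounds on the principal branch of the Lambert `W` function:
if `x ≥ e` and `w > 0` satisfies `w e^w = x`, then
`log x - log log x + (log log x)/(2 log x) ≤ w ≤ log x - log log x + (e/(e-1)) (log log x)/(log x)`. -/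
theorem stmt2 (x w : ℝ) (hx : Real.exp 1 ≤ x) (hw : 0 < w)
    (hwx : w * Real.exp w = x) :
    Real.log x - Real.log (Real.log x) + Real.log (Real.log x) / (2 * Real.log x) ≤ w ∧
    w ≤ Real.log x - Real.log (Real.log x) +
        (Real.exp 1 / (Real.exp 1 - 1)) * (Real.log (Real.log x) / Real.log x) := by
  have he1 : (1:ℝ) < Real.exp 1 := by
    have := Real.add_one_le_exp (1:ℝ); linarith
  have he0 : (0:ℝ) < Real.exp 1 := by linarith
  set L := Real.log x with hLdef
  have hL1 : 1 ≤ L := by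
    rw [hLdef]
    calc (1:ℝ) = Real.log (Real.exp 1) := (Real.log_exp 1).symm
    _ ≤ Real.log x := Real.log_le_log (Real.exp_pos 1) hx
  have hL0 : 0 < L := by linarith
  set M := Real.log L with hMdef
  have hM0 : 0 ≤ M := Real.log_nonneg hL1
  have hML : M ≤ L - 1 := Real.log_le_sub_one_of_pos hL0
  -- w + log w = L
  have hwL : w + Real.log w = L := by
    have h := congrArg Real.log hwx
    rw [Real.log_mul hw.ne' (Real.exp_ne_zero w), Real.log_exp] at h
    linarith [h]
  constructor
  · -- lower bound
    set t := M / (2 * L) with htdef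
    have ht0 : 0 ≤ t := div_nonneg hM0 (by linarith)
    have hMt : M = 2 * L * t := by
      rw [htdef]; field_simp
    set a := L - M + t with hadef
    have ha1 : 1 ≤ a := by
      have : L - M ≥ 1 := by linarith
      linarith
    have ha0 : 0 < a := by linarith
    have hexp : 1 - t ≤ Real.exp (-t) := by
      have := Real.add_one_le_exp (-t); linarith
    have key : a ≤ L * Real.exp (-t) := by
      have h1 : a ≤ L * (1 - t) := by nlinarith [mul_nonneg ht0 (by linarith : (0:ℝ) ≤ L - 1)]
      have h2 : L * (1 - t) ≤ L * Real.exp (-t) := by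
        apply mul_le_mul_of_nonneg_left hexp (le_of_lt hL0)
      linarith
    have hloga : Real.log a ≤ M - t := by
      have := Real.log_le_log ha0 key
      rwa [Real.log_mul hL0.ne' (Real.exp_ne_zero _), Real.log_exp] at this
    have hfa : a + Real.log a ≤ L := by linarith
    -- conclude a ≤ w
    by_contra hcon
    push_neg at hcon
    have hcon' : w < a := by linarith
    have : Real.log w < Real.log a := Real.log_lt_log hw hcon'
    linarith
  · -- upper bound
    set c := Real.exp 1 / (Real.exp 1 - 1) with hcdef
    have hc1 : 1 < c := by
      rw [hcdef]
      rw [lt_div_iff₀ (by linarith)]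
      linarith
    have hc0 : 0 < c := by linarith
    set u := M / L with hudef
    have hu0 : 0 ≤ u := div_nonneg hM0 hL0.le
    have hMu : M = L * u := by rw [hudef]; field_simp
    -- e*u ≤ 1
    have hMe : M ≤ L / Real.exp 1 := by
      have h1 : Real.log (L / Real.exp 1) ≤ L / Real.exp 1 - 1 :=
        Real.log_le_sub_one_of_pos (by positivity)
      rw [Real.log_div hL0.ne' (Real.exp_ne_zero 1), Real.log_exp] at h1
      linarith
    have heu1 : Real.exp 1 * u ≤ 1 := by
      rw [hudef, ← mul_div_assoc, div_le_one hL0]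
      calc Real.exp 1 * M ≤ Real.exp 1 * (L / Real.exp 1) :=
            mul_le_mul_of_nonneg_left hMe he0.le
        _ = L := by field_simp
    -- c/e = c - 1
    have hne : Real.exp 1 - 1 ≠ 0 := by linarith
    have hce : c / Real.exp 1 = c - 1 := by
      rw [hcdef]
      field_simp
      ring
    -- exp(-(c/e)) ≤ 1/c
    have hkey0 : Real.exp (-(c / Real.exp 1)) ≤ 1 / c := by
      rw [hce]
      have h1 : c ≤ Real.exp (c - 1) := by
        have := Real.add_one_le_exp (c - 1); linarith
      rw [Real.exp_neg, inv_eq_one_div, div_le_div_iff₀ (Real.exp_pos _) hc0]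
      nlinarith [Real.exp_pos (c-1)]
    -- 1/c = (e-1)/e
    have hinvc : 1 / c = (Real.exp 1 - 1) / Real.exp 1 := by
      rw [hcdef]; field_simp
    -- convexity: exp(-(c*u)) ≤ (1 - e u) * 1 + e u * exp(-(c/e))
    have hconv : Real.exp (-(c * u)) ≤ (1 - Real.exp 1 * u) * Real.exp 0
        + (Real.exp 1 * u) * Real.exp (-(c / Real.exp 1)) := by
      have h := convexOn_exp.2 (Set.mem_univ (0:ℝ)) (Set.mem_univ (-(c / Real.exp 1)))
        (by linarith : (0:ℝ) ≤ 1 - Real.exp 1 * u)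
        (by positivity : (0:ℝ) ≤ Real.exp 1 * u) (by ring)
      have harg : (1 - Real.exp 1 * u) • (0:ℝ) + (Real.exp 1 * u) • (-(c / Real.exp 1))
          = -(c * u) := by
        simp only [smul_eq_mul]
        field_simp
        ring
      rw [harg] at h
      simpa [smul_eq_mul] using h
    have key1 : Real.exp (-(c * u)) ≤ 1 - u := by
      have h2 : (Real.exp 1 * u) * Real.exp (-(c / Real.exp 1))
          ≤ (Real.exp 1 * u) * (1 / c) := by
        apply mul_le_mul_of_nonneg_left hkey0 (by positivity)
      have h3 : (Real.exp 1 * u) * (1 / c) = (Real.exp 1 - 1) * u := by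
        rw [hinvc]; field_simp
      rw [Real.exp_zero] at hconv
      nlinarith
    set b := L - M + c * u with hbdef
    have hb1 : 1 ≤ b := by nlinarith
    have hb0 : 0 < b := by linarith
    have key2 : L * Real.exp (-(c * u)) ≤ b := by
      have h1 : L * Real.exp (-(c * u)) ≤ L * (1 - u) :=
        mul_le_mul_of_nonneg_left key1 hL0.le
      nlinarith
    have hlogb : M - c * u ≤ Real.log b := by
      rw [Real.le_log_iff_exp_le hb0, Real.exp_sub, Real.exp_log hL0,
        div_le_iff₀ (Real.exp_pos _)]
      have h := mul_le_mul_of_nonneg_right key2 (Real.exp_pos (c*u)).le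
      rw [mul_assoc, ← Real.exp_add] at h
      simp only [neg_add_cancel, Real.exp_zero, mul_one] at h
      linarith
    have hfb : L ≤ b + Real.log b := by linarith
    -- conclude w ≤ b
    have hwb : w ≤ b := by
      by_contra hcon
      push_neg at hcon
      have : Real.log b < Real.log w := Real.log_lt_log hb0 hcon
      linarith
    calc w ≤ b := hwb
      _ = L - M + c * (M / L) := by rw [hbdef, hudef]
end

section
/- Let A ∈ {0,1}^{m×n} be a random matrix with i.i.d. entries A_{ij} ~ Bernoulli(p), where 0 < p ≤ 1/2. For k ∈ {0,1,…,n}, let Z_k be the number of vectors x ∈ {0,1}^n with exactly k ones such that Ax ≥ 1 entrywise. Then E[Z_k] ≤ n^k·exp(−m·e^{−2pk}) = exp(k·log n − m·e^{−2pk}). -/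
open Classical Finset

/-- `Z_k`: the number of feasible 0/1 vectors with exactly `k` ones. -/
noncomputable def Zk {m n : ℕ} (ω : Fin m → Fin n → Bool) (k : ℕ) : ℕ :=
  (Finset.univ.filter fun x : Fin n → Bool =>
    feasIP ω x ∧ (Finset.univ.filter fun j : Fin n => x j = true).card = k).card

/-- Expectation of `Z_k` under the i.i.d. Bernoulli(p) matrix distribution. -/
noncomputable def expZk (m n : ℕ) (p : ℝ) (k : ℕ) : ℝ :=
  ∑ ω : Fin m → Fin n → Bool, mWeight m n p ω * (Zk ω k : ℝ)

/-!
By linearity of expectation, `E[Z_k]` is `C(n,k)` times the probability that a fixed `x` with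
`k` ones is feasible. The rows of `A` are independent and a row meets the support of `x` with
probability `1 - (1-p)^k`, so `E[Z_k] = C(n,k) (1 - (1-p)^k)^m ≤ n^k exp(-m (1-p)^k)`, and
`(1-p)^k ≥ e^{-2pk}` because `1 - p ≥ e^{-2p}` for `0 ≤ p ≤ 1/2`.
-/

section Bernoulli

variable {ι : Type*} [Fintype ι]

noncomputable def bernoulliWeight (p : ℝ) (r : ι → Bool) : ℝ :=
  ∏ j, if r j then p else 1 - p

variable [DecidableEq ι]

theorem sum_prod_bool (f : ι → Bool → ℝ) :
    ∑ r : ι → Bool, ∏ j, f j (r j) = ∏ j, (f j true + f j false) := by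
  simp only [← Fintype.sum_bool, Fintype.prod_sum]

theorem sum_bernoulliWeight_mul_forall_false (p : ℝ) (s : Finset ι) :
    ∑ r, bernoulliWeight p r * (if ∀ j ∈ s, r j = false then 1 else 0) = (1 - p) ^ #s := by
  let f : ι → Bool → ℝ := fun j b => if b then (if j ∈ s then 0 else p) else 1 - p
  have hfactor : ∀ r : ι → Bool,
      bernoulliWeight p r * (if ∀ j ∈ s, r j = false then 1 else 0) = ∏ j, f j (r j) := by
    intro r
    split_ifs with h
    · refine (mul_one _).trans (Finset.prod_congr rfl fun j _ => ?_)
      by_cases hj : j ∈ s <;> simp [f, hj, h]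
    · push Not at h
      obtain ⟨j, hj, hrj⟩ := h
      rw [mul_zero, eq_comm]
      exact Finset.prod_eq_zero (Finset.mem_univ j) (by simp [f, hj, hrj])
  rw [Finset.sum_congr rfl fun r _ => hfactor r, sum_prod_bool]
  calc ∏ j, (f j true + f j false) = ∏ j, if j ∈ s then 1 - p else 1 :=
        Finset.prod_congr rfl fun j _ => by by_cases hj : j ∈ s <;> simp [f, hj]
    _ = (1 - p) ^ #s := by rw [Finset.prod_ite_mem, Finset.univ_inter, Finset.prod_const]

theorem sum_bernoulliWeight (p : ℝ) : ∑ r : ι → Bool, bernoulliWeight p r = 1 := by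
  simpa using sum_bernoulliWeight_mul_forall_false (ι := ι) p ∅

theorem sum_bernoulliWeight_mul_exists_true (p : ℝ) (s : Finset ι) :
    ∑ r, bernoulliWeight p r * (if ∃ j ∈ s, r j = true then 1 else 0) = 1 - (1 - p) ^ #s := by
  have hcompl : ∀ r : ι → Bool, (if ∃ j ∈ s, r j = true then (1 : ℝ) else 0) =
      1 - if ∀ j ∈ s, r j = false then 1 else 0 := by
    intro r
    split_ifs <;> grind
  simp only [hcompl, mul_sub, mul_one, Finset.sum_sub_distrib, sum_bernoulliWeight,
    sum_bernoulliWeight_mul_forall_false]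

end Bernoulli

theorem feasIP_iff {m n : ℕ} (ω : Fin m → Fin n → Bool) (x : Fin n → Bool) :
    feasIP ω x ↔ ∀ i, ∃ j ∈ univ.filter (fun j => x j = true), ω i j = true := by
  refine forall_congr' fun i => ?_
  simp only [ite_zero_mul_ite_zero, mul_one, Finset.sum_boole, Nat.one_le_cast,
    Finset.one_le_card, Finset.filter_nonempty_iff, Finset.mem_filter, Finset.mem_univ, true_and]
  exact ⟨fun ⟨j, hω, hx⟩ => ⟨j, hx, hω⟩, fun ⟨j, hx, hω⟩ => ⟨j, hω, hx⟩⟩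

theorem sum_mWeight_mul_feasIP (m n : ℕ) (p : ℝ) (x : Fin n → Bool) :
    ∑ ω, mWeight m n p ω * (if feasIP ω x then 1 else 0) =
      (1 - (1 - p) ^ #(univ.filter fun j => x j = true)) ^ m := by
  set s := univ.filter fun j => x j = true
  let rowHits : (Fin n → Bool) → ℝ := fun r =>
    bernoulliWeight p r * if ∃ j ∈ s, r j = true then 1 else 0
  have hfactor : ∀ ω, mWeight m n p ω * (if feasIP ω x then 1 else 0) = ∏ i, rowHits (ω i) := by
    intro ω
    rw [Finset.prod_mul_distrib, Fintype.prod_boole, feasIP_iff]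
    congr
  rw [Finset.sum_congr rfl fun ω _ => hfactor ω, ← Fintype.prod_sum (fun _ => rowHits),
    Finset.prod_const, Finset.card_univ, Fintype.card_fin]
  -- the two sides differ only in their decidability instances
  convert congrArg (· ^ m) (sum_bernoulliWeight_mul_exists_true p s)

theorem card_filter_card_eq_choose {ι : Type*} [Fintype ι] [DecidableEq ι] (k : ℕ) :
    #(univ.filter fun x : ι → Bool => #(univ.filter fun j => x j = true) = k) =
      (Fintype.card ι).choose k := by
  rw [← Finset.card_univ, ← Finset.card_powersetCard]
  refine Finset.card_nbij' (fun x => univ.filter fun j => x j = true) (fun s j => decide (j ∈ s))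
    ?_ ?_ ?_ ?_
  · intro x hx
    simpa using hx
  · intro s hs
    simp_all
  · intro x _
    funext j
    simp
  · intro s _
    ext j
    simp

theorem expZk_eq (m n : ℕ) (p : ℝ) (k : ℕ) :
    expZk m n p k = n.choose k * (1 - (1 - p) ^ k) ^ m := by
  set T := univ.filter fun x : Fin n → Bool => #(univ.filter fun j => x j = true) = k
  have hZk : ∀ ω : Fin m → Fin n → Bool, (Zk ω k : ℝ) = ∑ x ∈ T, if feasIP ω x then 1 else 0 := by
    intro ω
    rw [Finset.sum_boole, Finset.filter_filter, Zk]
    simp only [and_comm]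
  calc expZk m n p k = ∑ x ∈ T, ∑ ω, mWeight m n p ω * (if feasIP ω x then 1 else 0) := by
        simp only [expZk, hZk, Finset.mul_sum]
        exact Finset.sum_comm
    _ = ∑ x ∈ T, (1 - (1 - p) ^ k) ^ m := by
        refine Finset.sum_congr rfl fun x hx => ?_
        rw [sum_mWeight_mul_feasIP, (Finset.mem_filter.mp hx).2]
    _ = n.choose k * (1 - (1 - p) ^ k) ^ m := by
        rw [Finset.sum_const, nsmul_eq_mul, card_filter_card_eq_choose, Fintype.card_fin]

theorem exp_neg_two_mul_le_one_sub {x : ℝ} (hx0 : 0 ≤ x) (hx : x ≤ 1 / 2) :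
    Real.exp (-2 * x) ≤ 1 - x := by
  have h : 1 ≤ (1 - x) * Real.exp (2 * x) := by
    nlinarith [Real.add_one_le_exp (2 * x)]
  calc Real.exp (-2 * x) ≤ Real.exp (-2 * x) * ((1 - x) * Real.exp (2 * x)) :=
        le_mul_of_one_le_right (Real.exp_nonneg _) h
    _ = 1 - x := by rw [mul_left_comm, ← Real.exp_add]; simp

theorem one_sub_pow_le_exp_neg_mul {q : ℝ} (hq : q ≤ 1) (m : ℕ) :
    (1 - q) ^ m ≤ Real.exp (-m * q) := by
  calc (1 - q) ^ m ≤ Real.exp (-q) ^ m :=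
        pow_le_pow_left₀ (by linarith) (Real.one_sub_le_exp_neg q) m
    _ = Real.exp (-m * q) := by rw [← Real.exp_nat_mul]; ring_nf

theorem one_sub_one_sub_pow_pow_le {p : ℝ} (hp0 : 0 ≤ p) (hp : p ≤ 1 / 2) (k m : ℕ) :
    (1 - (1 - p) ^ k) ^ m ≤ Real.exp (-m * Real.exp (-2 * p * k)) := by
  have hexp : Real.exp (-2 * p * k) ≤ (1 - p) ^ k := by
    rw [mul_comm, Real.exp_nat_mul]
    exact pow_le_pow_left₀ (Real.exp_nonneg _) (exp_neg_two_mul_le_one_sub hp0 hp) k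
  calc (1 - (1 - p) ^ k) ^ m ≤ Real.exp (-m * (1 - p) ^ k) :=
        one_sub_pow_le_exp_neg_mul (pow_le_one₀ (by linarith) (by linarith)) m
    _ ≤ Real.exp (-m * Real.exp (-2 * p * k)) := by
        rw [neg_mul, neg_mul]
        gcongr

theorem stmt4_general (m n : ℕ) (hn : 1 ≤ n) (p : ℝ) (hp : 0 < p ∧ p ≤ 1 / 2)
    (k : ℕ) :
    expZk m n p k ≤ (n : ℝ) ^ k * Real.exp (-(m : ℝ) * Real.exp (-2 * p * k)) ∧
    (n : ℝ) ^ k * Real.exp (-(m : ℝ) * Real.exp (-2 * p * k)) =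
      Real.exp ((k : ℝ) * Real.log n - (m : ℝ) * Real.exp (-2 * p * k)) := by
  obtain ⟨hp0, hp2⟩ := hp
  constructor
  · rw [expZk_eq]
    gcongr ?_ * ?_
    · exact pow_nonneg (sub_nonneg.2 (pow_le_one₀ (by linarith) (by linarith))) m
    · exact_mod_cast Nat.choose_le_pow n k
    · exact one_sub_one_sub_pow_pow_le hp0.le hp2 k m
  · have hn' : (0 : ℝ) < n := by exact_mod_cast hn
    rw [sub_eq_add_neg, Real.exp_add, ← Real.log_pow, Real.exp_log (pow_pos hn' k), neg_mul]

/-- For `0 < p ≤ 1/2`,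
`E[Z_k] ≤ n^k exp(-m e^{-2pk}) = exp(k log n - m e^{-2pk})`. -/
theorem stmt4 (m n : ℕ) (hm : 1 ≤ m) (hn : 1 ≤ n) (p : ℝ) (hp : 0 < p ∧ p ≤ 1 / 2)
    (k : ℕ) (hk : k ≤ n) :
    expZk m n p k ≤ (n : ℝ) ^ k * Real.exp (-(m : ℝ) * Real.exp (-2 * p * k)) ∧
    (n : ℝ) ^ k * Real.exp (-(m : ℝ) * Real.exp (-2 * p * k)) =
      Real.exp ((k : ℝ) * Real.log n - (m : ℝ) * Real.exp (-2 * p * k)) :=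
  stmt4_general m n hn p hp k
end

section
/- In the asymptotic Bernoulli setting, assume m(n)·p(n)/log n → 0 as n → ∞ (sparse regime) and that log( log n / (m·p) ) / log n → 0. Then for every ε > 0 and all sufficiently large n, P( Bin(m, p) = ⌈ (ε/8)·log n / log( log n / (m·p) ) ⌉ ) ≥ n^{−ε}, where Bin(m,p) denotes a Binomial(m,p) random variable. -/
open Nat Filter
set_option maxHeartbeats 1000000


open Finset in
lemma aux_pow_mul_factorial_le (M k : ℕ) (hk : k ≤ M) :
    M ^ k * k ! ≤ M.descFactorial k * k ^ k := by
  rw [Nat.descFactorial_eq_prod_range, ← Finset.prod_range_add_one_eq_factorial]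
  have h1 : (∏ i ∈ range k, (i + 1)) = ∏ i ∈ range k, (k - i) := by
    rw [← Finset.prod_range_reflect (fun j => j + 1) k]
    apply Finset.prod_congr rfl
    intro i hi
    have := Finset.mem_range.mp hi
    omega
  have eM : M ^ k = ∏ i ∈ Finset.range k, M := by simp
  have ek : k ^ k = ∏ i ∈ Finset.range k, k := by simp
  rw [h1, eM, ek, ← Finset.prod_mul_distrib, ← Finset.prod_mul_distrib]
  apply Finset.prod_le_prod'
  intro i hi
  have hik := Finset.mem_range.mp hi
  have e1 : M * (k - i) = M * k - M * i := Nat.mul_sub _ _ _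
  have e2 : (M - i) * k = M * k - i * k := Nat.sub_mul _ _ _
  rw [e1, e2]
  exact Nat.sub_le_sub_left (by calc i * k ≤ i * M := Nat.mul_le_mul_left i hk
                                  _ = M * i := Nat.mul_comm _ _) _

lemma aux_choose_lb (M k : ℕ) (hk : k ≤ M) :
    (M : ℝ) ^ k ≤ (M.choose k : ℝ) * (k : ℝ) ^ k := by
  have h := aux_pow_mul_factorial_le M k hk
  rw [Nat.descFactorial_eq_factorial_mul_choose] at h
  have h2 : M ^ k ≤ M.choose k * k ^ k := by
    have hf := Nat.factorial_pos k
    have : M ^ k * k ! ≤ M.choose k * k ^ k * k ! := by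
      calc M ^ k * k ! ≤ k ! * M.choose k * k ^ k := h
        _ = M.choose k * k ^ k * k ! := by ring
    exact Nat.le_of_mul_le_mul_right this hf
  exact_mod_cast h2

lemma aux_exp_le (x : ℝ) (h0 : 0 ≤ x) (h1 : x ≤ 1/2) : Real.exp (-(2*x)) ≤ 1 - x := by
  have he := Real.add_one_le_exp (2*x)
  have hpos : (0:ℝ) < 1 + 2*x := by linarith
  have e : Real.exp (-(2*x)) * Real.exp (2*x) = 1 := by
    rw [← Real.exp_add]; simp
  have a : Real.exp (-(2*x)) * (1 + 2*x) ≤ 1 := by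
    calc Real.exp (-(2*x)) * (1 + 2*x) ≤ Real.exp (-(2*x)) * Real.exp (2*x) :=
          mul_le_mul_of_nonneg_left (by linarith) (Real.exp_nonneg _)
      _ = 1 := e
  have b : (1:ℝ) ≤ (1-x) * (1+2*x) := by nlinarith
  exact le_of_mul_le_mul_right (a.trans b) hpos


/-- `P(Bin(N, q) = k)` for a Binomial(N, q) random variable. -/
noncomputable def binomP (N : ℕ) (q : ℝ) (k : ℕ) : ℝ :=
  (N.choose k : ℝ) * q ^ k * (1 - q) ^ (N - k)

/-- In the sparse regime `mp / log n → 0` (with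
`log(log n / (mp)) / log n → 0`), for every `ε > 0` and all large `n`,
`P(Bin(m,p) = ⌈(ε/8) log n / log(log n/(mp))⌉) ≥ n^{-ε}`. -/
theorem stmt7 (m : ℕ → ℕ) (p : ℕ → ℝ) (δ : ℝ)
    (hδ : 0 < δ ∧ δ < 1)
    (hp0 : ∀ n, 0 < p n ∧ p n ≤ 1)
    (hm : ∃ c C : ℝ, 0 < c ∧ 0 < C ∧ ∃ N : ℕ, ∀ n ≥ N,
      c * (n : ℝ) ^ c ≤ (m n : ℝ) ∧ (m n : ℝ) ≤ C * (n : ℝ) ^ C)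
    (hp : ∃ N : ℕ, ∀ n ≥ N, (n : ℝ) ^ (-δ) ≤ p n ∧ p n ≤ 1 / 2)
    (hsparse : Tendsto (fun n : ℕ => (m n : ℝ) * p n / Real.log n) atTop (nhds 0))
    (hlog : Tendsto (fun n : ℕ => Real.log (Real.log n / ((m n : ℝ) * p n)) / Real.log n)
      atTop (nhds 0)) :
    ∀ ε : ℝ, 0 < ε → ∃ N : ℕ, ∀ n ≥ N,
      (n : ℝ) ^ (-ε) ≤
        binomP (m n) (p n)
          ⌈(ε / 8) * Real.log n / Real.log (Real.log n / ((m n : ℝ) * p n))⌉₊ := by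
  intro ε hε
  have hlogtop : Tendsto (fun n : ℕ => Real.log n) atTop atTop :=
    Real.tendsto_log_atTop.comp tendsto_natCast_atTop_atTop
  have F0 : ∀ᶠ n : ℕ in atTop, (2:ℝ) ≤ Real.log n := hlogtop.eventually_ge_atTop 2
  have F1 : ∀ᶠ n : ℕ in atTop, p n ≤ 1/2 := by
    obtain ⟨N, hN⟩ := hp
    exact eventually_atTop.mpr ⟨N, fun n hn => (hN n hn).2⟩
  have F2 : ∀ᶠ n : ℕ in atTop, Real.log n ≤ (m n : ℝ) := by
    obtain ⟨c, C, hc, hC, N, hN⟩ := hm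
    have hlo := (isLittleO_log_rpow_atTop hc).def hc
    have h1 : ∀ᶠ x : ℝ in atTop, Real.log x ≤ c * x ^ c := by
      filter_upwards [hlo, eventually_ge_atTop (1:ℝ)] with x hx h1x
      have habs : |Real.log x| ≤ c * |x ^ c| := by simpa [Real.norm_eq_abs] using hx
      have hxpos : (0:ℝ) ≤ x := by linarith
      rw [abs_of_nonneg (Real.log_nonneg h1x), abs_of_nonneg (Real.rpow_nonneg hxpos c)]
        at habs
      exact habs
    have h2 := tendsto_natCast_atTop_atTop.eventually h1
    filter_upwards [h2, eventually_ge_atTop N] with n hn hnN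
    exact hn.trans (hN n hnN).1
  have FL : ∀ T : ℝ, ∀ᶠ n : ℕ in atTop,
      T ≤ Real.log (Real.log n / ((m n : ℝ) * p n)) := by
    intro T
    have h1 : ∀ᶠ n : ℕ in atTop, (m n:ℝ) * p n / Real.log n < Real.exp (-T) :=
      hsparse.eventually (eventually_lt_nhds (Real.exp_pos (-T)))
    filter_upwards [h1, F0, F2] with n h1 h0 h2
    have hln : (0:ℝ) < Real.log n := by linarith
    have hm1 : (0:ℝ) < (m n : ℝ) := by linarith
    have hq := (hp0 n).1
    have hmp : 0 < (m n:ℝ) * p n := mul_pos hm1 hq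
    have key : Real.exp T ≤ Real.log n / ((m n:ℝ) * p n) := by
      rw [le_div_iff₀ hmp]
      have h3 : (m n:ℝ) * p n < Real.exp (-T) * Real.log n := by
        rw [div_lt_iff₀ hln] at h1; linarith
      calc Real.exp T * ((m n:ℝ) * p n)
          ≤ Real.exp T * (Real.exp (-T) * Real.log n) :=
            mul_le_mul_of_nonneg_left (le_of_lt h3) (Real.exp_nonneg T)
        _ = (Real.exp T * Real.exp (-T)) * Real.log n := by ring
        _ = Real.log n := by rw [← Real.exp_add]; simp
    calc T = Real.log (Real.exp T) := (Real.log_exp T).symm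
      _ ≤ _ := Real.log_le_log (Real.exp_pos T) key
  have F4 : ∀ᶠ n : ℕ in atTop,
      Real.log (Real.log n / ((m n : ℝ) * p n)) / Real.log n < ε/8 :=
    hlog.eventually (eventually_lt_nhds (by positivity))
  have F5 : ∀ᶠ n : ℕ in atTop, (m n:ℝ) * p n / Real.log n < ε/8 :=
    hsparse.eventually (eventually_lt_nhds (by positivity))
  have main : ∀ᶠ n : ℕ in atTop,
      (n : ℝ) ^ (-ε) ≤
        binomP (m n) (p n)
          ⌈(ε / 8) * Real.log n / Real.log (Real.log n / ((m n : ℝ) * p n))⌉₊ := by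
    filter_upwards [F0, F1, F2, FL (max 1 (ε/4)), F4, F5, eventually_ge_atTop 2]
      with n hln2 hp12 hlnm hLlb hLub hsp hn2
    set M := m n with hMdef
    set q := p n with hqdef
    set Ln := Real.log (Real.log n / ((M : ℝ) * q)) with hLndef
    have hq0 : 0 < q := (hp0 n).1
    have hq1 : q ≤ 1 := (hp0 n).2
    have hln0 : (0:ℝ) < Real.log n := by linarith
    have hM0 : (0:ℝ) < (M:ℝ) := by linarith
    have hMq : 0 < (M:ℝ) * q := mul_pos hM0 hq0
    have hQ : 0 < Real.log n / ((M:ℝ)*q) := div_pos hln0 hMq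
    have hL1 : (1:ℝ) ≤ Ln := le_trans (le_max_left _ _) hLlb
    have hLe : ε/4 ≤ Ln := le_trans (le_max_right _ _) hLlb
    have hL0 : (0:ℝ) < Ln := by linarith
    have hLub' : Ln ≤ ε/8 * Real.log n := by
      rw [div_lt_iff₀ hln0] at hLub; linarith
    set x := ε / 8 * Real.log n / Ln with hxdef
    have hx0 : 0 < x := by positivity
    set k := ⌈x⌉₊ with hkdef
    have hk1 : 0 < k := Nat.ceil_pos.mpr hx0
    have hk0 : (0:ℝ) < (k:ℝ) := by exact_mod_cast hk1
    have hkx : (k:ℝ) < x + 1 := Nat.ceil_lt_add_one hx0.le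
    have hxln : x ≤ Real.log n / 2 := by
      rw [hxdef, div_le_div_iff₀ hL0 two_pos]
      nlinarith
    have hkln : (k:ℝ) ≤ Real.log n := by linarith
    have hkM : k ≤ M := by
      have : (k:ℝ) ≤ (M:ℝ) := le_trans hkln hlnm
      exact_mod_cast this
    have hexpnegL : Real.exp (-Ln) = (M:ℝ)*q / Real.log n := by
      rw [Real.exp_neg, hLndef, Real.exp_log hQ, inv_div]
    have hb1 : Real.exp (-(ε/4 * Real.log n)) ≤ ((M:ℝ)*q/(k:ℝ))^k := by
      have step1 : Real.exp (-Ln) ≤ (M:ℝ)*q/(k:ℝ) := by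
        rw [hexpnegL]
        exact div_le_div_of_nonneg_left hMq.le hk0 hkln
      have step2 : Real.exp (-Ln) ^ k ≤ ((M:ℝ)*q/(k:ℝ))^k :=
        pow_le_pow_left₀ (Real.exp_nonneg _) step1 k
      have step3 : Real.exp (-(ε/4 * Real.log n)) ≤ Real.exp (-Ln) ^ k := by
        rw [← Real.exp_nat_mul]
        apply Real.exp_le_exp.mpr
        have h2 : x * Ln = ε/8 * Real.log n := by
          rw [hxdef]; field_simp
        nlinarith [mul_le_mul_of_nonneg_right hkx.le hL0.le]
      exact step3.trans step2
    have hb2 : Real.exp (-(ε/4 * Real.log n)) ≤ (1-q)^M := by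
      have h1 : Real.exp (-(2*q)) ≤ 1 - q := aux_exp_le q hq0.le hp12
      have h2 : Real.exp (-(2*q))^M ≤ (1-q)^M :=
        pow_le_pow_left₀ (Real.exp_nonneg _) h1 M
      have h3 : Real.exp (-(ε/4 * Real.log n)) ≤ Real.exp (-(2*q))^M := by
        rw [← Real.exp_nat_mul]
        apply Real.exp_le_exp.mpr
        have h4 : (M:ℝ)*q < ε/8 * Real.log n := by
          rw [div_lt_iff₀ hln0] at hsp; linarith
        nlinarith
      exact h3.trans h2
    have hchoose : ((M:ℝ)*q/(k:ℝ))^k ≤ (M.choose k : ℝ) * q^k := by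
      have hc := aux_choose_lb M k hkM
      have hkk : (0:ℝ) < (k:ℝ)^k := by positivity
      rw [div_pow, mul_pow, div_le_iff₀ hkk]
      calc (M:ℝ)^k * q^k ≤ ((M.choose k:ℝ) * (k:ℝ)^k) * q^k :=
            mul_le_mul_of_nonneg_right hc (by positivity)
        _ = (M.choose k:ℝ) * q^k * (k:ℝ)^k := by ring
    have hpowmk : (1-q)^M ≤ (1-q)^(M-k) :=
      pow_le_pow_of_le_one (by linarith) (by linarith) (Nat.sub_le M k)
    have hfinal : Real.exp (-(ε/4*Real.log n)) * Real.exp (-(ε/4*Real.log n))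
        ≤ binomP M q k := by
      have h1 : Real.exp (-(ε/4*Real.log n)) * Real.exp (-(ε/4*Real.log n))
          ≤ ((M:ℝ)*q/(k:ℝ))^k * (1-q)^M :=
        mul_le_mul hb1 hb2 (Real.exp_pos _).le (by positivity)
      have h2 : ((M:ℝ)*q/(k:ℝ))^k * (1-q)^M
          ≤ ((M.choose k:ℝ) * q^k) * (1-q)^(M-k) := by
        apply mul_le_mul hchoose hpowmk (pow_nonneg (by linarith) M) (by positivity)
      calc _ ≤ ((M:ℝ)*q/(k:ℝ))^k * (1-q)^M := h1
        _ ≤ ((M.choose k:ℝ) * q^k) * (1-q)^(M-k) := h2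
        _ = binomP M q k := by rw [binomP]
    have hn0 : (0:ℝ) < (n:ℝ) := by
      have : (2:ℝ) ≤ (n:ℝ) := by exact_mod_cast hn2
      linarith
    calc (n:ℝ)^(-ε) = Real.exp (Real.log n * (-ε)) := Real.rpow_def_of_pos hn0 _
      _ = Real.exp (-(ε/4*Real.log n) + -(ε/4*Real.log n)
            + -(ε/2*Real.log n)) := by ring_nf
      _ ≤ Real.exp (-(ε/4*Real.log n) + -(ε/4*Real.log n)) := by
          apply Real.exp_le_exp.mpr
          nlinarith
      _ = Real.exp (-(ε/4*Real.log n)) * Real.exp (-(ε/4*Real.log n)) :=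
          Real.exp_add _ _
      _ ≤ binomP M q k := hfinal
  exact eventually_atTop.mp main
end

section
/- In the asymptotic Bernoulli setting, assume there exists c₃ > 0 with m(n)·p(n) ≥ c₃·log n for all large n (dense regime). Let X_1, …, X_n be i.i.d. Binomial(m,p). Then there exists a constant c₂ > 0 such that for all sufficiently large n, m·p ≤ E[ max_{i∈[n]} X_i ] ≤ c₂·m·p. -/
/-!
The lower bound is `E[max_i X_i] ≥ E[X_1] = mp`. For the upper bound, Jensen's inequality for
`exp` and `exp (max_i X_i) ≤ ∑_i exp X_i` give
`exp E[max_i X_i] ≤ n E[e^{X_1}] = n (1 + p(e - 1))^m ≤ n exp((e - 1) mp)`,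
so `E[max_i X_i] ≤ log n + (e - 1) mp`; in the dense regime `log n ≤ mp / c₃`.
-/

open Classical Finset

/-- Probability weight of `n` independent rows of `m` i.i.d. Bernoulli(p) trials;
row `i` realizes the Binomial(m,p) variable `X i`. -/
noncomputable def bWeight (n m : ℕ) (p : ℝ) (ω : Fin n → Fin m → Bool) : ℝ :=
  ∏ i : Fin n, ∏ j : Fin m, if ω i j then p else 1 - p

/-- Probability of an event for `n` i.i.d. Binomial(m,p) variables. -/
noncomputable def bProb (n m : ℕ) (p : ℝ) (P : (Fin n → Fin m → Bool) → Prop) : ℝ :=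
  ∑ ω : Fin n → Fin m → Bool, if P ω then bWeight n m p ω else 0

/-- `X i`: the `i`-th Binomial(m,p) variable (number of successes in row `i`). -/
def Xvar {n m : ℕ} (ω : Fin n → Fin m → Bool) (i : Fin n) : ℕ :=
  (Finset.univ.filter fun j : Fin m => ω i j = true).card

/-- `max_{i ∈ [n]} X_i`. -/
def maxX {n m : ℕ} (ω : Fin n → Fin m → Bool) : ℕ :=
  Finset.univ.sup (Xvar ω)

/-- `E[max_{i ∈ [n]} X_i]` for `n` i.i.d. Binomial(m,p) variables. -/
noncomputable def expMax (n m : ℕ) (p : ℝ) : ℝ :=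
  ∑ ω : Fin n → Fin m → Bool, bWeight n m p ω * (maxX ω : ℝ)

open Real

section
variable {n m : ℕ} {p : ℝ}

lemma sum_bWeight_mul_prod (g : Fin n → Fin m → Bool → ℝ) :
    ∑ ω : Fin n → Fin m → Bool, bWeight n m p ω * ∏ i, ∏ j, g i j (ω i j)
      = ∏ i, ∏ j, (p * g i j true + (1 - p) * g i j false) := by
  have hpoint : ∀ i j, p * g i j true + (1 - p) * g i j false
      = ∑ b : Bool, (if b then p else 1 - p) * g i j b := by
    simp
  simp_rw [hpoint, Fintype.prod_sum, bWeight, ← prod_mul_distrib]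

lemma sum_bWeight_mul_prod_row (i : Fin n) (g : Fin m → Bool → ℝ) :
    ∑ ω : Fin n → Fin m → Bool, bWeight n m p ω * ∏ j, g j (ω i j)
      = ∏ j, (p * g j true + (1 - p) * g j false) := by
  have hrow : ∀ (i' : Fin n) (j : Fin m), p * (if i' = i then g j true else 1)
      + (1 - p) * (if i' = i then g j false else 1)
      = if i' = i then p * g j true + (1 - p) * g j false else 1 := by
    intro i' j
    split_ifs <;> ring
  have h := sum_bWeight_mul_prod (p := p) fun i' j b => if i' = i then g j b else 1
  simpa only [hrow, prod_ite_irrel, prod_const_one, prod_ite_eq', mem_univ, if_true] using h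

lemma sum_bWeight : ∑ ω : Fin n → Fin m → Bool, bWeight n m p ω = 1 := by
  simpa using sum_bWeight_mul_prod (n := n) (m := m) (p := p) fun _ _ _ => 1

lemma bWeight_nonneg (hp0 : 0 ≤ p) (hp1 : p ≤ 1) (ω : Fin n → Fin m → Bool) :
    0 ≤ bWeight n m p ω :=
  prod_nonneg fun i _ => prod_nonneg fun j _ => by split <;> linarith

lemma Xvar_eq_sum (ω : Fin n → Fin m → Bool) (i : Fin n) :
    (Xvar ω i : ℝ) = ∑ j, if ω i j then 1 else 0 := by
  simp [Xvar, sum_boole]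

lemma sum_bWeight_mul_Xvar (i : Fin n) :
    ∑ ω : Fin n → Fin m → Bool, bWeight n m p ω * Xvar ω i = m * p := by
  have hcoord : ∀ j, ∑ ω : Fin n → Fin m → Bool,
      bWeight n m p ω * (if ω i j then 1 else 0) = p := by
    intro j
    simpa [apply_ite, prod_ite_eq'] using
      sum_bWeight_mul_prod_row (p := p) i fun j' b => if j' = j then (if b then 1 else 0) else 1
  simp_rw [Xvar_eq_sum, mul_sum]
  rw [sum_comm]
  simp only [hcoord, sum_const, card_univ, Fintype.card_fin, nsmul_eq_mul]

lemma exp_Xvar (ω : Fin n → Fin m → Bool) (i : Fin n) :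
    exp (Xvar ω i) = ∏ j, if ω i j then exp 1 else 1 := by
  rw [← prod_filter, prod_const, ← exp_nat_mul, mul_one, Xvar]

lemma sum_bWeight_mul_exp_Xvar (i : Fin n) :
    ∑ ω : Fin n → Fin m → Bool, bWeight n m p ω * exp (Xvar ω i)
      = (1 + p * (exp 1 - 1)) ^ m := by
  simp_rw [exp_Xvar]
  rw [sum_bWeight_mul_prod_row i fun _ b => if b then exp 1 else 1]
  simp only [if_true, Bool.false_eq_true, if_false, prod_const, card_univ, Fintype.card_fin]
  ring

lemma mul_le_expMax (hp0 : 0 ≤ p) (hp1 : p ≤ 1) (hn : 0 < n) : m * p ≤ expMax n m p := by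
  rw [← sum_bWeight_mul_Xvar (n := n) ⟨0, hn⟩]
  refine sum_le_sum fun ω _ => mul_le_mul_of_nonneg_left ?_ (bWeight_nonneg hp0 hp1 ω)
  exact_mod_cast le_sup (f := Xvar ω) (mem_univ _)

lemma exp_maxX_le_sum (hn : 0 < n) (ω : Fin n → Fin m → Bool) :
    exp (maxX ω) ≤ ∑ i, exp (Xvar ω i) := by
  obtain ⟨i, -, hi⟩ := exists_mem_eq_sup univ (univ_nonempty_iff.2 ⟨⟨0, hn⟩⟩) (Xvar ω)
  rw [maxX, hi]
  exact single_le_sum (f := fun i => exp (Xvar ω i)) (fun i _ => (exp_pos _).le) (mem_univ i)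

lemma exp_expMax_le (hp0 : 0 ≤ p) (hp1 : p ≤ 1) (hn : 0 < n) :
    exp (expMax n m p) ≤ n * exp ((exp 1 - 1) * (m * p)) := by
  have hw := bWeight_nonneg (n := n) (m := m) hp0 hp1
  calc exp (expMax n m p)
      ≤ ∑ ω : Fin n → Fin m → Bool, bWeight n m p ω * exp (maxX ω) :=
        convexOn_exp.map_sum_le (fun ω _ => hw ω) sum_bWeight (fun _ _ => Set.mem_univ _)
    _ ≤ ∑ ω : Fin n → Fin m → Bool, bWeight n m p ω * ∑ i, exp (Xvar ω i) :=
        sum_le_sum fun ω _ => mul_le_mul_of_nonneg_left (exp_maxX_le_sum hn ω) (hw ω)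
    _ = n * (1 + p * (exp 1 - 1)) ^ m := by
        simp_rw [mul_sum]
        rw [sum_comm]
        simp only [sum_bWeight_mul_exp_Xvar, sum_const, card_univ, Fintype.card_fin, nsmul_eq_mul]
    _ ≤ n * exp ((exp 1 - 1) * (m * p)) := by
        have h1 : 0 ≤ 1 + p * (exp 1 - 1) := by nlinarith [add_one_le_exp 1]
        have h2 : 1 + p * (exp 1 - 1) ≤ exp (p * (exp 1 - 1)) := by
          linarith [add_one_le_exp (p * (exp 1 - 1))]
        rw [show (exp 1 - 1) * (m * p) = m * (p * (exp 1 - 1)) by ring, exp_nat_mul]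
        gcongr

lemma expMax_le_log_add (hp0 : 0 ≤ p) (hp1 : p ≤ 1) (hn : 0 < n) :
    expMax n m p ≤ log n + (exp 1 - 1) * (m * p) := by
  have hn' : (0 : ℝ) < n := Nat.cast_pos.2 hn
  rw [← log_exp ((exp 1 - 1) * (m * p)), ← log_mul hn'.ne' (exp_pos _).ne',
    le_log_iff_exp_le (by positivity)]
  exact exp_expMax_le hp0 hp1 hn
end

theorem stmt9_general (m : ℕ → ℕ) (p : ℕ → ℝ)
    (hp0 : ∀ n, 0 < p n ∧ p n ≤ 1)
    (c₃ : ℝ) (hc₃ : 0 < c₃)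
    (hdense : ∃ N : ℕ, ∀ n ≥ N, c₃ * Real.log n ≤ (m n : ℝ) * p n) :
    ∃ c₂ : ℝ, 0 < c₂ ∧ ∃ N : ℕ, ∀ n ≥ N,
      (m n : ℝ) * p n ≤ expMax n (m n) (p n) ∧
      expMax n (m n) (p n) ≤ c₂ * ((m n : ℝ) * p n) := by
  obtain ⟨N, hN⟩ := hdense
  have he : 0 < exp 1 - 1 := by linarith [add_one_lt_exp one_ne_zero]
  refine ⟨c₃⁻¹ + (exp 1 - 1), by positivity, N + 1, fun n hn => ?_⟩
  have hn0 : 0 < n := by omega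
  obtain ⟨hpos, hp1⟩ := hp0 n
  refine ⟨mul_le_expMax hpos.le hp1 hn0, ?_⟩
  have hlog : log n ≤ c₃⁻¹ * (m n * p n) := by
    rw [inv_mul_eq_div, le_div_iff₀ hc₃]
    linarith [hN n (by omega)]
  calc expMax n (m n) (p n) ≤ log n + (exp 1 - 1) * (m n * p n) :=
        expMax_le_log_add hpos.le hp1 hn0
    _ ≤ (c₃⁻¹ + (exp 1 - 1)) * (m n * p n) := by rw [add_mul]; linarith

/-- In the dense regime (`mp ≥ c₃ log n`), the expected maximum of `n`
i.i.d. Binomial(m,p) variables satisfies `mp ≤ E[max_i X_i] ≤ c₂ mp` for large `n`. -/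
theorem stmt9 (m : ℕ → ℕ) (p : ℕ → ℝ) (δ : ℝ)
    (hδ : 0 < δ ∧ δ < 1)
    (hp0 : ∀ n, 0 < p n ∧ p n ≤ 1)
    (hm : ∃ c C : ℝ, 0 < c ∧ 0 < C ∧ ∃ N : ℕ, ∀ n ≥ N,
      c * (n : ℝ) ^ c ≤ (m n : ℝ) ∧ (m n : ℝ) ≤ C * (n : ℝ) ^ C)
    (hp : ∃ N : ℕ, ∀ n ≥ N, (n : ℝ) ^ (-δ) ≤ p n ∧ p n ≤ 1 / 2)
    (c₃ : ℝ) (hc₃ : 0 < c₃)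
    (hdense : ∃ N : ℕ, ∀ n ≥ N, c₃ * Real.log n ≤ (m n : ℝ) * p n) :
    ∃ c₂ : ℝ, 0 < c₂ ∧ ∃ N : ℕ, ∀ n ≥ N,
      (m n : ℝ) * p n ≤ expMax n (m n) (p n) ∧
      expMax n (m n) (p n) ≤ c₂ * ((m n : ℝ) * p n) :=
  stmt9_general m p hp0 c₃ hc₃ hdense
end

section
/- Let a(n), b(n) be positive real sequences and p(n) ∈ (0,1) a sequence such that b(n) → ∞, b(n)/√(a(n)) → 0, p(n) → 0, and there is a constant C > 1 with b(n) ≥ C·a(n)·p(n) for all large n. Then for every ε > 0 and all sufficiently large n, log P( Bin(⌈a(n)⌉, p(n)) = ⌈b(n)⌉ ) ≥ −(1+ε)·( b·log( b/(a·p) ) − b + a·p ). The same lower bound holds with ⌈a(n)⌉ replaced by ⌊a(n)⌋ and ⌈b(n)⌉ by ⌊b(n)⌋. -/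
open Filter

/-!
Write `S = b log (b / (a p)) - b + a p`. From `C(N, k) ≥ (N + 1 - k)^k / k!`, the upper
Stirling bound `log k! ≤ k log k - k + (log k) / 2 + 1` and `-log (1 - p) ≤ p + 2 p²`, one
gets, whenever `|N - a| ≤ 1`, `|k - b| ≤ 1` and `a ≥ 2 (b + 1)²`, the non-asymptotic bound
`log P(Bin(N, p) = k) ≥ -(1 + 1/b) S - (6 + log b + 2 b p)`.
Since `b ≥ C a p` with `C > 1` and `u ↦ log u - 1 + 1/u` is increasing on `[1, ∞)`,
`S ≥ δ b` with `δ = log C - 1 + 1/C > 0`; hence both the factor `1/b` and the error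
`6 + log b + 2 b p = o(b)` are absorbed into `ε S`.
-/

open Real Asymptotics Topology
open scoped Nat

theorem log_factorial_le (n : ℕ) : log n ! ≤ n * log n - n + log n / 2 + 1 := by
  rcases n with _ | m
  · simp
  -- `stirlingSeq n = n! / (√(2n) (n/e)^n)` decreases from `stirlingSeq 1 = e / √2`.
  have h := Stirling.log_stirlingSeq'_antitone (Nat.zero_le m)
  simp only [Function.comp_apply, Stirling.log_stirlingSeq_formula, Stirling.stirlingSeq_one] at h
  have hm : (0 : ℝ) < (m + 1 : ℕ) := by positivity
  rw [log_div (exp_pos 1).ne' (by positivity), log_exp, log_sqrt (by norm_num),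
    log_mul two_ne_zero hm.ne', log_div hm.ne' (exp_pos 1).ne', log_exp] at h
  push_cast at h ⊢
  linarith

theorem neg_sub_two_mul_sq_le_log_one_sub {x : ℝ} (hx : x ≤ 1 / 2) :
    -x - 2 * x ^ 2 ≤ log (1 - x) := by
  have h1x : 0 < 1 - x := by linarith
  have hinv : (1 - x)⁻¹ ≤ 1 + x + 2 * x ^ 2 := by
    rw [inv_le_iff_one_le_mul₀ h1x]
    nlinarith [sq_nonneg x]
  linarith [one_sub_inv_le_log_of_pos h1x]

theorem neg_one_le_mul_log_one_sub {k x : ℝ} (hk : 0 ≤ k) (hx0 : 0 ≤ x) (hx : x ≤ 1 / 2)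
    (hkx : 2 * k * x ≤ 1) : -1 ≤ k * log (1 - x) := by
  have h : -(2 * x) ≤ log (1 - x) := by
    nlinarith [neg_sub_two_mul_sq_le_log_one_sub hx]
  nlinarith [mul_le_mul_of_nonneg_left h hk]

theorem sub_inv_le_mul_log_div_add {b k : ℝ} (hb : 0 < b) (hk : 0 < k) (hkb : |k - b| ≤ 1) :
    b - b⁻¹ ≤ k * log (b / k) + k := by
  have h := mul_le_mul_of_nonneg_left (one_sub_inv_le_log_of_pos (div_pos hb hk)) hk.le
  have hsq : (k - b) ^ 2 ≤ 1 := by nlinarith [sq_abs (k - b), abs_nonneg (k - b)]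
  have he : b - (k - b) ^ 2 / b = k * (1 - (b / k)⁻¹) + k := by
    field_simp
    ring
  have : (k - b) ^ 2 / b ≤ b⁻¹ := by rw [inv_eq_one_div]; gcongr
  linarith

theorem log_le_log_add_inv {b k : ℝ} (hb : 0 < b) (hk : 0 < k) (hkb : k ≤ b + 1) :
    log k ≤ log b + b⁻¹ := by
  have h := log_le_sub_one_of_pos (div_pos hk hb)
  rw [log_div hk.ne' hb.ne'] at h
  have : k / b - 1 ≤ b⁻¹ := by
    rw [div_sub_one hb.ne', inv_eq_one_div]; gcongr; linarith
  linarith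

theorem log_sub_one_add_inv_le {C u : ℝ} (hC : 1 ≤ C) (hu : C ≤ u) :
    log C - 1 + C⁻¹ ≤ log u - 1 + u⁻¹ := by
  have hC0 : 0 < C := by linarith
  have hu0 : 0 < u := by linarith
  have hlog : 1 - C / u ≤ log u - log C := by
    rw [← log_div hu0.ne' hC0.ne']
    simpa using one_sub_inv_le_log_of_pos (div_pos hu0 hC0)
  have hinv : C⁻¹ - u⁻¹ ≤ 1 - C / u := by
    rw [inv_sub_inv hC0.ne' hu0.ne', one_sub_div hu0.ne']
    exact div_le_div_of_nonneg_left (by linarith) hu0 (by nlinarith)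
  linarith

/-- The Kullback–Leibler divergence of `Poisson x` from `Poisson μ`; the exponent in the theorem
is `poissonRate (a * p) b`. -/
noncomputable def poissonRate (μ x : ℝ) : ℝ := x * log (x / μ) - x + μ

theorem mul_le_poissonRate {C μ x : ℝ} (hC : 1 ≤ C) (hμ : 0 < μ) (hx : C * μ ≤ x) :
    (log C - 1 + C⁻¹) * x ≤ poissonRate μ x := by
  have hx0 : 0 < x := lt_of_lt_of_le (mul_pos (by linarith) hμ) hx
  calc (log C - 1 + C⁻¹) * x ≤ (log (x / μ) - 1 + (x / μ)⁻¹) * x :=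
        mul_le_mul_of_nonneg_right (log_sub_one_add_inv_le hC ((le_div_iff₀ hμ).2 hx)) hx0.le
    _ = poissonRate μ x := by rw [poissonRate]; field_simp

theorem mul_log_sub_log_factorial_le_log_choose {N k : ℕ} (hk : k ≤ N) :
    k * log ((N : ℝ) + 1 - k) - log k ! ≤ log (N.choose k) := by
  have hpow : ((N + 1 - k : ℕ) : ℝ) ^ k ≤ N.choose k * k ! :=
    (div_le_iff₀ (by positivity)).1 (Nat.pow_le_choose k N)
  have hcast : ((N + 1 - k : ℕ) : ℝ) = N + 1 - k := by
    rw [Nat.cast_sub (by omega)]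
    push_cast
    ring
  have hchoose : (0 : ℝ) < N.choose k := by exact_mod_cast Nat.choose_pos hk
  have hkN : (k : ℝ) ≤ N := by exact_mod_cast hk
  rw [hcast] at hpow
  have h := log_le_log (pow_pos (by linarith) k) hpow
  rw [log_pow, log_mul hchoose.ne' (by positivity)] at h
  linarith

theorem log_binomP {N k : ℕ} {p : ℝ} (hk : k ≤ N) (hp0 : 0 < p) (hp1 : p < 1) :
    log (binomP N p k) = log (N.choose k) + k * log p + ((N : ℝ) - k) * log (1 - p) := by
  have hchoose : (0 : ℝ) < N.choose k := by exact_mod_cast Nat.choose_pos hk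
  rw [binomP, log_mul (by positivity) (pow_pos (by linarith) _).ne',
    log_mul hchoose.ne' (by positivity), log_pow, log_pow, Nat.cast_sub hk]

theorem le_log_binomP {N k : ℕ} {p : ℝ} (hk : k ≤ N) (hp0 : 0 < p) (hp : p ≤ 1 / 2) :
    k * log (((N : ℝ) + 1 - k) * p / k) + k - log k / 2 - 1 - N * (p + 2 * p ^ 2) ≤
      log (binomP N p k) := by
  have hkN : (k : ℝ) ≤ N := by exact_mod_cast hk
  have hsplit : k * log (((N : ℝ) + 1 - k) * p / k) =
      k * log ((N : ℝ) + 1 - k) + k * log p - k * log k := by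
    rcases k.eq_zero_or_pos with rfl | hk0
    · simp
    · have hk0' : (0 : ℝ) < k := by exact_mod_cast hk0
      rw [log_div (mul_pos (by linarith) hp0).ne' hk0'.ne', log_mul (by linarith) hp0.ne']
      ring
  have hlog1p : -(p + 2 * p ^ 2) ≤ log (1 - p) := by
    linarith [neg_sub_two_mul_sq_le_log_one_sub hp]
  have hlog1p' : log (1 - p) ≤ 0 := log_nonpos (by linarith) (by linarith)
  have hrest : -(N * (p + 2 * p ^ 2)) ≤ ((N : ℝ) - k) * log (1 - p) :=
    calc -(N * (p + 2 * p ^ 2)) ≤ N * log (1 - p) := by nlinarith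
      _ ≤ ((N : ℝ) - k) * log (1 - p) := mul_le_mul_of_nonpos_right (by linarith) hlog1p'
  rw [log_binomP hk hp0 (by linarith)]
  linarith [mul_log_sub_log_factorial_le_log_choose hk, log_factorial_le k]

theorem neg_poissonRate_sub_le_log_binomP {a b p : ℝ} {N k : ℕ} (hp0 : 0 < p) (hp : p ≤ 1 / 2)
    (hb : 1 < b) (hab : 2 * (b + 1) ^ 2 ≤ a) (hapb : a * p ≤ b) (hN : |(N : ℝ) - a| ≤ 1)
    (hk : |(k : ℝ) - b| ≤ 1) :
    -((1 + b⁻¹) * poissonRate (a * p) b) - (6 + log b + 2 * b * p) ≤ log (binomP N p k) := by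
  obtain ⟨hN1, hN2⟩ := abs_le.1 hN
  obtain ⟨hk1, hk2⟩ := abs_le.1 hk
  have hb0 : 0 < b := by linarith
  have ha : 0 < a := by nlinarith
  have hk0 : (0 : ℝ) < k := by linarith
  have hkN : k ≤ N := by exact_mod_cast (show (k : ℝ) ≤ N by nlinarith)
  set x := (b + 1) / a with hx
  have hx0 : 0 ≤ x := by positivity
  have hx2 : x ≤ 1 / 2 := by rw [hx, div_le_iff₀ ha]; nlinarith
  have h1x : 0 < 1 - x := by linarith
  have hax : a * (1 - x) = a - b - 1 := by rw [hx]; field_simp; ring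
  set ℓ := log (b / (a * p)) with hℓ
  have hℓ0 : 0 ≤ ℓ := log_nonneg ((one_le_div (by positivity)).2 hapb)
  have hlog : log (a * (1 - x) * p / k) = -ℓ + log (b / k) + log (1 - x) := by
    rw [hℓ, log_div hb0.ne' (by positivity), log_div (by positivity) hk0.ne',
      log_div hb0.ne' hk0.ne', log_mul (by positivity) hp0.ne', log_mul ha.ne' h1x.ne',
      log_mul ha.ne' hp0.ne']
    ring
  have hmono : k * log (a * (1 - x) * p / k) ≤ k * log (((N : ℝ) + 1 - k) * p / k) :=
    mul_le_mul_of_nonneg_left (log_le_log (by positivity) (div_le_div_of_nonneg_right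
      (mul_le_mul_of_nonneg_right (by linarith) hp0.le) hk0.le)) hk0.le
  rw [hlog] at hmono
  have hkx : -1 ≤ k * log (1 - x) := neg_one_le_mul_log_one_sub hk0.le hx0 hx2
    (by rw [hx, mul_div_assoc', div_le_one ha]; nlinarith)
  have hkℓ : -((b + 1) * ℓ) ≤ k * -ℓ := by nlinarith
  have hNp : N * (p + 2 * p ^ 2) ≤ a * p + 2 * b * p + 1 := by nlinarith
  have hrate :
      (b + 1) * ℓ = (1 + b⁻¹) * poissonRate (a * p) b + b - a * p + 1 - a * p * b⁻¹ := by
    rw [poissonRate, ← hℓ]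
    field_simp
    ring
  have hbinv : b⁻¹ ≤ 1 := inv_le_one_of_one_le₀ hb.le
  have hlogb : 0 ≤ log b := log_nonneg hb.le
  have happ : 0 ≤ a * p * b⁻¹ := by positivity
  linarith [le_log_binomP hkN hp0 hp, sub_inv_le_mul_log_div_add hb0 hk0 hk,
    log_le_log_add_inv hb0 hk0 (by linarith)]

theorem isLittleO_const_add_log_add_mul {ι : Type*} {l : Filter ι} {b p : ι → ℝ} (c d : ℝ)
    (hb : Tendsto b l atTop) (hp : Tendsto p l (𝓝 0)) :
    (fun i => c + log (b i) + d * b i * p i) =o[l] b := by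
  have hc : (fun _ => c) =o[l] b :=
    isLittleO_const_left.2 (Or.inr (tendsto_norm_atTop_atTop.comp hb))
  have hlog : (fun i => log (b i)) =o[l] b := isLittleO_log_id_atTop.comp_tendsto hb
  have hbp : (fun i => b i * p i) =o[l] b := by
    simpa using (isBigO_refl b l).mul_isLittleO ((isLittleO_one_iff ℝ).2 hp)
  simpa only [mul_assoc] using (hc.add hlog).add (hbp.const_mul_left d)

theorem eventually_one_add_inv_mul_add_le {ι : Type*} {l : Filter ι} {b S R : ι → ℝ} {δ ε : ℝ}
    (hδ : 0 < δ) (hε : 0 < ε) (hb : Tendsto b l atTop) (hS : ∀ᶠ i in l, δ * b i ≤ S i)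
    (hR : R =o[l] b) : ∀ᶠ i in l, (1 + (b i)⁻¹) * S i + R i ≤ (1 + ε) * S i := by
  filter_upwards [hS, hb.eventually_ge_atTop (2 / ε),
    hR.bound (c := ε * δ / 2) (by positivity)] with i hSi hbi hRi
  have hb0 : 0 < b i := lt_of_lt_of_le (by positivity) hbi
  have hS0 : 0 ≤ S i := le_trans (by positivity) hSi
  have hinv : (b i)⁻¹ ≤ ε / 2 := by
    rw [inv_le_comm₀ hb0 (by positivity), inv_div]; exact hbi
  rw [Real.norm_eq_abs, Real.norm_eq_abs, abs_of_pos hb0] at hRi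
  have hRS : R i ≤ ε / 2 * S i := by
    calc R i ≤ ε * δ / 2 * b i := (le_abs_self _).trans hRi
      _ = ε / 2 * (δ * b i) := by ring
      _ ≤ ε / 2 * S i := by gcongr
  nlinarith [mul_le_mul_of_nonneg_right hinv hS0]

theorem abs_natCeil_sub_le_one {x : ℝ} (hx : 0 ≤ x) : |(⌈x⌉₊ : ℝ) - x| ≤ 1 :=
  abs_le.2 ⟨by linarith [Nat.le_ceil x], by linarith [Nat.ceil_lt_add_one hx]⟩

theorem abs_natFloor_sub_le_one {x : ℝ} (hx : 0 ≤ x) : |(⌊x⌋₊ : ℝ) - x| ≤ 1 :=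
  abs_le.2 ⟨by linarith [Nat.sub_one_lt_floor x], by linarith [Nat.floor_le hx]⟩

theorem two_mul_add_one_sq_le_of_div_sqrt_le {a b : ℝ} (ha : 0 < a) (hb : 1 ≤ b)
    (h : b / √a ≤ 1 / 4) :
    2 * (b + 1) ^ 2 ≤ a := by
  have hs : 0 < √a := sqrt_pos.2 ha
  have hb4 : 4 * b ≤ √a := by rw [div_le_iff₀ hs] at h; linarith
  nlinarith [sq_sqrt ha.le]

/-- Lower bound on the binomial probability mass function: if `b → ∞`,
`b/√a → 0`, `p → 0` and `b ≥ C a p` eventually for some `C > 1`, then for every `ε > 0`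
and all large `n`,
`log P(Bin(⌈a⌉, p) = ⌈b⌉) ≥ -(1+ε)(b log(b/(ap)) - b + ap)`, and the same holds with
floors in place of ceilings. -/
theorem stmt15 (a b : ℕ → ℝ) (p : ℕ → ℝ)
    (hab : ∀ n, 0 < a n ∧ 0 < b n)
    (hp01 : ∀ n, 0 < p n ∧ p n < 1)
    (hb : Tendsto b atTop atTop)
    (hba : Tendsto (fun n => b n / Real.sqrt (a n)) atTop (nhds 0))
    (hp : Tendsto p atTop (nhds 0))
    (hC : ∃ C : ℝ, 1 < C ∧ ∃ N : ℕ, ∀ n ≥ N, C * (a n * p n) ≤ b n) :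
    ∀ ε : ℝ, 0 < ε → ∃ N : ℕ, ∀ n ≥ N,
      -( (1 + ε) * (b n * Real.log (b n / (a n * p n)) - b n + a n * p n)) ≤
        Real.log (binomP ⌈a n⌉₊ (p n) ⌈b n⌉₊) ∧
      -( (1 + ε) * (b n * Real.log (b n / (a n * p n)) - b n + a n * p n)) ≤
        Real.log (binomP ⌊a n⌋₊ (p n) ⌊b n⌋₊) := by
  obtain ⟨C, hC1, N₀, hCn⟩ := hC
  intro ε hε
  have hδ : 0 < log C - 1 + C⁻¹ := by
    have h := log_lt_sub_one_of_pos (inv_pos.2 (by linarith)) (inv_ne_one.2 hC1.ne')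
    rw [log_inv] at h
    linarith
  have hrate : ∀ᶠ n in atTop, (log C - 1 + C⁻¹) * b n ≤ poissonRate (a n * p n) (b n) :=
    eventually_atTop.2 ⟨N₀, fun n hn =>
      mul_le_poissonRate hC1.le (mul_pos (hab n).1 (hp01 n).1) (hCn n hn)⟩
  refine eventually_atTop.1 ?_
  filter_upwards [eventually_one_add_inv_mul_add_le hδ hε hb hrate
      (isLittleO_const_add_log_add_mul 6 2 hb hp), hb.eventually_gt_atTop 1,
      hba.eventually_le_const (by norm_num : (0 : ℝ) < 1 / 4),
      hp.eventually_le_const (by norm_num : (0 : ℝ) < 1 / 2), eventually_ge_atTop N₀]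
    with n hfin hb1 hba4 hp2 hn
  obtain ⟨ha0, hb0⟩ := hab n
  have hap : 0 < a n * p n := mul_pos ha0 (hp01 n).1
  have ha := two_mul_add_one_sq_le_of_div_sqrt_le ha0 hb1.le hba4
  have hapb : a n * p n ≤ b n := (le_mul_of_one_le_left hap.le hC1.le).trans (hCn n hn)
  have hbin : ∀ N k : ℕ, |(N : ℝ) - a n| ≤ 1 → |(k : ℝ) - b n| ≤ 1 →
      -((1 + ε) * poissonRate (a n * p n) (b n)) ≤ log (binomP N (p n) k) := fun N k hN hk => by
    linarith [neg_poissonRate_sub_le_log_binomP (hp01 n).1 hp2 hb1 ha hapb hN hk]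
  exact ⟨hbin _ _ (abs_natCeil_sub_le_one ha0.le) (abs_natCeil_sub_le_one hb0.le),
    hbin _ _ (abs_natFloor_sub_le_one ha0.le) (abs_natFloor_sub_le_one hb0.le)⟩
end

section
/- Let a(n), b(n) be positive real sequences and p(n) ∈ (0,1) a sequence such that b(n) → ∞, b(n)/√(a(n)) → 0, p(n) → 0, and b(n)/(a(n)·p(n)) → ∞. Then for every ε > 0 and all sufficiently large n, log P( Bin(⌈a(n)⌉, p(n)) = ⌈b(n)⌉ ) ≥ −(1+ε)·b·log( b/(a·p) ). -/
/-!
Write `K = ⌈b⌉`, `N = ⌈a⌉` and `L = log (b / (a p))`. The bound `C(N, K) ≥ (N / K) ^ K` gives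
`log P(Bin(N, p) = K) ≥ -K log (K / (N p)) + (N - K) log (1 - p)`, where `b = o(√a)` ensures
`K ≤ N`. Since `K ≤ b + 1` and `L → ∞`, the first term is `-(1 + o(1)) b L`; the second is at
least `-2 p a`, which is `o(b)` because `b / (a p) → ∞`.
-/

open Filter Real

theorem Nat.div_pow_le_choose {α : Type*} [Field α] [LinearOrder α] [IsStrictOrderedRing α]
    {n k : ℕ} (hkn : k ≤ n) : ((n : α) / k) ^ k ≤ n.choose k := by
  induction k generalizing n with
  | zero => simp
  | succ k ih =>
    obtain ⟨m, rfl⟩ : ∃ m, n = m + 1 := ⟨n - 1, by omega⟩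
    have hkm : k ≤ m := by omega
    have hratio : (((m : α) + 1) / (k + 1)) ^ k ≤ ((m : α) / k) ^ k := by
      rcases k.eq_zero_or_pos with rfl | hk
      · simp
      · apply pow_le_pow_left₀ (by positivity)
        rw [div_le_div_iff₀ (by positivity) (by exact_mod_cast hk)]
        have : (k : α) ≤ m := by exact_mod_cast hkm
        linarith
    have hrec : ((m : α) + 1) * m.choose k = (m + 1).choose (k + 1) * (k + 1) := by
      exact_mod_cast Nat.add_one_mul_choose_eq m k
    calc (((m + 1 : ℕ) : α) / (k + 1 : ℕ)) ^ (k + 1)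
        = ((m : α) + 1) / (k + 1) * (((m : α) + 1) / (k + 1)) ^ k := by
          push_cast; ring
      _ ≤ ((m : α) + 1) / (k + 1) * m.choose k := by
          gcongr
          exact hratio.trans (ih hkm)
      _ = (m + 1).choose (k + 1) := by
          rw [div_mul_eq_mul_div, hrec, mul_div_cancel_right₀ _ (by positivity)]

theorem Real.neg_two_mul_le_log_one_sub {q : ℝ} (hq : 0 ≤ q) (hq2 : q ≤ 1 / 2) :
    -(2 * q) ≤ log (1 - q) := by
  have h1q : 0 < 1 - q := by linarith
  have hinv : (1 - q)⁻¹ ≤ 2 := by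
    rw [inv_le_comm₀ h1q (by norm_num)]
    linarith
  have hsplit : 1 - (1 - q)⁻¹ = -(q * (1 - q)⁻¹) := by
    field_simp
    ring
  calc -(2 * q) ≤ -(q * (1 - q)⁻¹) := by nlinarith
    _ = 1 - (1 - q)⁻¹ := hsplit.symm
    _ ≤ log (1 - q) := one_sub_inv_le_log_of_pos h1q

theorem neg_mul_log_add_le_log_binomP {N K : ℕ} {q : ℝ} (hK : 0 < K) (hKN : K ≤ N)
    (hq : 0 < q) (hq1 : q < 1) :
    -(K * log (K / (N * q))) + (N - K) * log (1 - q) ≤ log (binomP N q K) := by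
  have hK' : (0 : ℝ) < K := by exact_mod_cast hK
  have hN' : (0 : ℝ) < N := by exact_mod_cast hK.trans_le hKN
  have hchoose : (0 : ℝ) < N.choose K := by exact_mod_cast Nat.choose_pos hKN
  have hlog_choose : K * (log N - log K) ≤ log (N.choose K) := by
    have h := log_le_log (by positivity) (Nat.div_pow_le_choose (α := ℝ) hKN)
    rwa [log_pow, log_div hN'.ne' hK'.ne'] at h
  have hlog_binomP : log (binomP N q K) =
      log (N.choose K) + K * log q + (N - K) * log (1 - q) := by
    unfold binomP
    rw [log_mul (by positivity) (pow_pos (by linarith) _).ne', log_mul hchoose.ne' (by positivity),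
      log_pow, log_pow, Nat.cast_sub hKN]
  rw [hlog_binomP, log_div hK'.ne' (by positivity), log_mul hN'.ne' hq.ne']
  linarith

theorem mul_log_div_mul_le {A B K N q : ℝ} (hB : 0 < B) (hBK : B ≤ K) (hKB : K ≤ B + 1)
    (hA : 0 < A) (hAN : A ≤ N) (hq : 0 < q) (hL : 0 ≤ log (B / (A * q))) :
    K * log (K / (N * q)) ≤ (B + 1) * (log (B / (A * q)) + 1 / B) := by
  have hK : 0 < K := hB.trans_le hBK
  have hN : 0 < N := hA.trans_le hAN
  have hmono : log (K / (N * q)) ≤ log ((B + 1) / (A * q)) :=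
    log_le_log (by positivity) (div_le_div₀ (by positivity) hKB (by positivity) (by gcongr))
  have hsucc : log ((B + 1) / (A * q)) ≤ log (B / (A * q)) + 1 / B := by
    have hsplit : (B + 1) / (A * q) = B / (A * q) * (1 + 1 / B) := by
      field_simp
    rw [hsplit, log_mul (by positivity) (by positivity)]
    have := log_le_sub_one_of_pos (show 0 < 1 + 1 / B by positivity)
    linarith
  calc K * log (K / (N * q)) ≤ K * (log (B / (A * q)) + 1 / B) := by
        gcongr
        exact hmono.trans hsucc
    _ ≤ (B + 1) * (log (B / (A * q)) + 1 / B) := by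
        gcongr

theorem neg_mul_log_le_log_binomP_ceil {A B q ε : ℝ} (hA : 0 < A) (hB : 1 ≤ B) (hBA : B ≤ A)
    (hq : 0 < q) (hq2 : q ≤ 1 / 2) (hL : 2 ≤ log (B / (A * q))) (hεB : 4 ≤ ε * B)
    (hεAq : 4 ≤ ε * (B / (A * q))) :
    -((1 + ε) * (B * log (B / (A * q)))) ≤ log (binomP ⌈A⌉₊ q ⌈B⌉₊) := by
  set L := log (B / (A * q))
  have hBK : B ≤ ⌈B⌉₊ := Nat.le_ceil B
  have hKB : (⌈B⌉₊ : ℝ) ≤ B + 1 := (Nat.ceil_lt_add_one (by linarith)).le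
  have hAN : A ≤ ⌈A⌉₊ := Nat.le_ceil A
  have hNA : (⌈A⌉₊ : ℝ) ≤ A + 1 := (Nat.ceil_lt_add_one hA.le).le
  have hK : 0 < ⌈B⌉₊ := Nat.ceil_pos.mpr (by linarith)
  have hKN : ⌈B⌉₊ ≤ ⌈A⌉₊ := Nat.ceil_le_ceil hBA
  have hbinomP := neg_mul_log_add_le_log_binomP hK hKN hq (by linarith)
  have hhead := mul_log_div_mul_le (by linarith) hBK hKB hA hAN hq (by linarith)
  have htail : -(2 * q) * A ≤ (⌈A⌉₊ - ⌈B⌉₊) * log (1 - q) := by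
    have hlog := neg_two_mul_le_log_one_sub hq.le hq2
    have hnonpos : log (1 - q) ≤ 0 := log_nonpos (by linarith) (by linarith)
    calc -(2 * q) * A ≤ log (1 - q) * A := by gcongr
      _ ≤ log (1 - q) * (⌈A⌉₊ - ⌈B⌉₊) := mul_le_mul_of_nonpos_left (by linarith) hnonpos
      _ = _ := mul_comm _ _
  have hAq : 4 * (A * q) ≤ ε * B := by
    rwa [mul_div_assoc', le_div_iff₀ (by positivity)] at hεAq
  have hBinv : B * (1 / B) = 1 := by field_simp
  have h1B : 1 / B ≤ 1 := by rw [div_le_one (by linarith)]; exact hB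
  -- `L + 1 + 1/B ≤ 2L ≤ εBL/2` and `2Aq ≤ εB/2 ≤ εBL/2`
  have hbudget : (B + 1) * (L + 1 / B) + 2 * q * A ≤ (1 + ε) * (B * L) := by
    nlinarith
  linarith

theorem le_of_div_sqrt_lt_one {A B : ℝ} (hA : 0 < A) (hB : 1 ≤ B) (h : B / √A < 1) : B ≤ A := by
  have hBA : B < √A := (div_lt_one (sqrt_pos.mpr hA)).mp h
  nlinarith [sq_sqrt hA.le]

/-- If `b → ∞`, `b/√a → 0`, `p → 0` and `b/(ap) → ∞`, then for every
`ε > 0` and all large `n`, `log P(Bin(⌈a⌉, p) = ⌈b⌉) ≥ -(1+ε) b log(b/(ap))`. -/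
theorem stmt16 (a b : ℕ → ℝ) (p : ℕ → ℝ)
    (hab : ∀ n, 0 < a n ∧ 0 < b n)
    (hp01 : ∀ n, 0 < p n ∧ p n < 1)
    (hb : Tendsto b atTop atTop)
    (hba : Tendsto (fun n => b n / Real.sqrt (a n)) atTop (nhds 0))
    (hp : Tendsto p atTop (nhds 0))
    (hbap : Tendsto (fun n => b n / (a n * p n)) atTop atTop) :
    ∀ ε : ℝ, 0 < ε → ∃ N : ℕ, ∀ n ≥ N,
      -( (1 + ε) * (b n * Real.log (b n / (a n * p n)))) ≤
        Real.log (binomP ⌈a n⌉₊ (p n) ⌈b n⌉₊) := by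
  intro ε hε
  have hlarge := (hb.eventually_ge_atTop 1).and
    (((hb.const_mul_atTop hε).eventually_ge_atTop 4).and
    (((hbap.const_mul_atTop hε).eventually_ge_atTop 4).and
    ((tendsto_log_atTop.comp hbap).eventually_ge_atTop 2)))
  have hsmall := (hp.eventually (ge_mem_nhds (by norm_num : (0 : ℝ) < 1 / 2))).and
    (hba.eventually (gt_mem_nhds one_pos))
  obtain ⟨N, hN⟩ := eventually_atTop.mp (hlarge.and hsmall)
  refine ⟨N, fun n hn => ?_⟩
  obtain ⟨⟨hB, hεB, hεR, hL⟩, hq, hsqrt⟩ := hN n hn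
  exact neg_mul_log_le_log_binomP_ceil (hab n).1 hB (le_of_div_sqrt_lt_one (hab n).1 hB hsqrt)
    (hp01 n).1 hq hL hεB hεR
end
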